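/- Let p be an odd prime and let γ be a self-conjugate p-core. A partition λ of |γ| + 2p with p-core γ is self-conjugate if and only if λ = ⟨(p−1)/2 − k, (p−1)/2 + k⟩ for some integer k with 1 ≤ k ≤ (p−1)/2; moreover these (p−1)/2 partitions are pairwise distinct. -/

import Mathlib

namespace ArxivW2

/-- A partition of a natural number, given by its (weakly decreasing, finitely
supported) sequence of parts, `part i` being the `(i+1)`-st part. -/
structure PartitionNat : Type where
  part : ℕ → ℕ
  antitone : Antitone part
  finite_support : (Function.support part).Finite

namespace PartitionNat

/-- The rank `|λ|` of a partition: the sum of its parts. -/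
noncomputable def size (μ : PartitionNat) : ℕ := ∑ᶠ i, μ.part i

/-- The number of nonzero parts of a partition. -/
noncomputable def len (μ : PartitionNat) : ℕ := (Function.support μ.part).ncard

/-- The `(j+1)`-st part of the conjugate partition: `λ'_{j+1} = #{i : λ_i ≥ j+1}`. -/
noncomputable def conj (μ : PartitionNat) (j : ℕ) : ℕ := {i : ℕ | j + 1 ≤ μ.part i}.ncard

/-- A partition is self-conjugate if it equals its conjugate. -/
def SelfConj (μ : PartitionNat) : Prop := ∀ j, μ.part j = μ.conj j

/-- `(i, j)` (0-indexed) is a node of the Young diagram of `μ`. -/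
def IsNode (μ : PartitionNat) (i j : ℕ) : Prop := j < μ.part i

/-- The hook length of the (0-indexed) node `(i,j)`:
`h = λ_{i+1} + λ'_{j+1} − (i+1) − (j+1) + 1`. -/
noncomputable def hook (μ : PartitionNat) (i j : ℕ) : ℕ := μ.part i + μ.conj j - (i + j + 1)

/-- A partition is a `p`-core if no hook length of a node is divisible by `p`. -/
def IsCore (p : ℕ) (μ : PartitionNat) : Prop := ∀ i j, μ.IsNode i j → ¬ p ∣ μ.hook i j

/-- The `p`-weight of a partition: the number of nodes whose hook length is
divisible by `p`. -/
noncomputable def pweight (p : ℕ) (μ : PartitionNat) : ℕ :=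
  {x : ℕ × ℕ | μ.IsNode x.1 x.2 ∧ p ∣ μ.hook x.1 x.2}.ncard

/-- The `N`-bead beta-set `B_N(λ) = {λ_i + N − i : 1 ≤ i ≤ N}` of a partition
(meaningful when `N ≥ len λ`). -/
def betaSet (N : ℕ) (μ : PartitionNat) : Finset ℕ :=
  (Finset.range N).image fun i => μ.part i + (N - 1 - i)

/-- A partition is `p`-regular if no nonzero part is repeated `p` or more times. -/
def Regular (p : ℕ) (μ : PartitionNat) : Prop :=
  ∀ i, μ.part i ≠ 0 → μ.part (i + p - 1) < μ.part i

end PartitionNat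

open PartitionNat

/-- `γ` is the `p`-core of `lam`: `γ` is a `p`-core, and for some `N` at least the
number of parts of both, the `N`-bead beta-sets of `lam` and `γ` have the same number
of elements in each residue class mod `p`. -/
def HasCore (p : ℕ) (lam gam : PartitionNat) : Prop :=
  IsCore p gam ∧ ∃ N : ℕ, lam.len ≤ N ∧ gam.len ≤ N ∧ ∀ r : ℕ,
    ((betaSet N lam).filter fun b => b % p = r).card =
      ((betaSet N gam).filter fun b => b % p = r).card

/-- Membership in the `p`-block of weight `w` with `p`-core `gam`. -/
def InBlock (p w : ℕ) (gam lam : PartitionNat) : Prop :=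
  lam.size = gam.size + w * p ∧ HasCore p lam gam

/-- The dominance order: `lam ⊴ mu`. -/
def Dom (lam mu : PartitionNat) : Prop :=
  ∀ k : ℕ, ∑ i ∈ Finset.range k, lam.part i ≤ ∑ i ∈ Finset.range k, mu.part i

/-- `mu` is obtained from `lam` by removing a `p`-rim-hook of leg length `l`. -/
def RemoveHook (p : ℕ) (lam mu : PartitionNat) (l : ℕ) : Prop :=
  ∃ N b : ℕ, lam.len ≤ N ∧ mu.len ≤ N ∧ b ∈ betaSet N lam ∧ p ≤ b ∧
    b - p ∉ betaSet N lam ∧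
    betaSet N mu = insert (b - p) (betaSet N lam \ {b}) ∧
    l = ((betaSet N lam).filter fun x => b - p < x ∧ x < b).card

/-- `lam` belongs to the set `∂_l` of the weight-2 block of `gam`:
it lies in the block and some (equivalently, every) two-step `p`-rim-hook removal
sequence from `lam` down to `gam` has leg lengths `l₁, l₂` with `|l₁ − l₂| = l`. -/
def DelClass (p : ℕ) (gam : PartitionNat) (l : ℕ) (lam : PartitionNat) : Prop :=
  InBlock p 2 gam lam ∧ ∃ mu l1 l2, RemoveHook p lam mu l1 ∧ RemoveHook p mu gam l2 ∧
    max l1 l2 - min l1 l2 = l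

/-- `ρ 0 < ρ 1 < ⋯ < ρ (p−1)` is the increasing enumeration of the maxima of the
residue classes mod `p` in the `N`-bead beta-set of `gam`. -/
def IsRho (p N : ℕ) (gam : PartitionNat) (ρ : ℕ → ℕ) : Prop :=
  (∀ i j, i < j → j < p → ρ i < ρ j) ∧
  (∀ i, i < p → ρ i ∈ betaSet N gam ∧ ∀ b ∈ betaSet N gam, b % p = ρ i % p → b ≤ ρ i) ∧
  (∀ r, r < p → ∃ i, i < p ∧ ρ i % p = r)

/-- The beta-set of the partition `⟨i,j⟩` (`i < j`). -/
def pairBeta (p : ℕ) (B : Finset ℕ) (ρ : ℕ → ℕ) (i j : ℕ) : Finset ℕ :=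
  (B \ {ρ i, ρ j}) ∪ {ρ i + p, ρ j + p}

/-- The beta-set of the partition `⟨i⟩`. -/
def oneBeta (p : ℕ) (B : Finset ℕ) (ρ : ℕ → ℕ) (i : ℕ) : Finset ℕ :=
  (B \ {ρ i}) ∪ {ρ i + 2 * p}

/-- The beta-set of the partition `⟨i²⟩`. -/
def sqBeta (p : ℕ) (B : Finset ℕ) (ρ : ℕ → ℕ) (i : ℕ) : Finset ℕ :=
  (B \ {ρ i - p}) ∪ {ρ i + p}

/-- The pyramid entry `γ_{ij}` of the block, extended by `1` for `i > j` and `0`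
for `j ≥ p`. -/
def pyr (p : ℕ) (ρ : ℕ → ℕ) (i j : ℕ) : ℕ :=
  if j < i then 1 else if p ≤ j then 0 else if ρ j - ρ i < p then 1 else 0

/-- The beta-set of Fayers' partition `⌈i,j⌋` (for `0 ≤ i ≤ j ≤ p−1`, `i < p−1`),
defined by cases on the pyramid entries. -/
def fayersBeta (p : ℕ) (B : Finset ℕ) (ρ : ℕ → ℕ) (i j : ℕ) : Finset ℕ :=
  if i = j then
    (if pyr p ρ (i + 1) (i + 2) = 1 then pairBeta p B ρ (i + 1) (i + 2)
     else oneBeta p B ρ (i + 1))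
  else
    if pyr p ρ i (j + 1) = 1 then pairBeta p B ρ i (j + 1)
    else if pyr p ρ i j = 1 then oneBeta p B ρ i
    else if pyr p ρ (i + 1) j = 1 then sqBeta p B ρ j
    else pairBeta p B ρ (i + 1) j

/-- The set of `p`-BG-partitions in the block of weight `w` with core `gam`:
self-conjugate partitions in the block none of whose diagonal hook lengths is
divisible by `p`. -/
def BGset (p w : ℕ) (gam : PartitionNat) : Set PartitionNat :=
  {lam | InBlock p w gam lam ∧ SelfConj lam ∧ ∀ i, lam.IsNode i i → ¬ p ∣ lam.hook i i}


open Finset in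
lemma lower_eq_Iio {S : Set ℕ} (hfin : S.Finite) (hlow : ∀ a b, a ≤ b → b ∈ S → a ∈ S) :
    S = Set.Iio S.ncard := by
  rcases S.eq_empty_or_nonempty with h | h
  · rw [h]; simp only [Set.ncard_empty]; ext x; simp
  · have hne : hfin.toFinset.Nonempty := by simpa using h
    have hMS : hfin.toFinset.max' hne ∈ S := by simpa using hfin.toFinset.max'_mem hne
    have hSIic : S = Set.Iic (hfin.toFinset.max' hne) := by
      ext a
      constructor
      · intro ha; exact Finset.le_max' _ a (by simpa using ha)
      · intro ha; exact hlow a _ ha hMS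
    rw [hSIic]
    have h2 : (Set.Iic (hfin.toFinset.max' hne)).ncard = hfin.toFinset.max' hne + 1 := by
      rw [← Finset.coe_Iic, Set.ncard_coe_finset]
      simp
    rw [h2]
    ext a; simp [Nat.lt_succ_iff]

namespace PartitionNat
variable (μ : PartitionNat)

lemma support_eq : Function.support μ.part = Set.Iio μ.len :=
  lower_eq_Iio μ.finite_support (fun a b hab hb => by
    simp only [Function.mem_support] at *
    have := μ.antitone hab
    omega)

lemma part_eq_zero_iff {i : ℕ} : μ.part i = 0 ↔ μ.len ≤ i := by
  have := μ.support_eq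
  constructor
  · intro h
    by_contra hc
    have : i ∈ Function.support μ.part := by rw [this]; simpa using by omega
    simp [Function.mem_support, h] at this
  · intro h
    by_contra hc
    have : i ∈ Set.Iio μ.len := by rw [← this]; simpa using hc
    simp at this; omega

lemma conj_set_eq (j : ℕ) : {i : ℕ | j + 1 ≤ μ.part i} = Set.Iio (μ.conj j) :=
  lower_eq_Iio
    (Set.Finite.subset μ.finite_support (fun i hi => by
      simp only [Set.mem_setOf_eq] at hi; simp [Function.mem_support]; omega))
    (fun a b hab hb => by
      simp only [Set.mem_setOf_eq] at *
      have := μ.antitone hab; omega)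

lemma lt_conj_iff {i j : ℕ} : i < μ.conj j ↔ j + 1 ≤ μ.part i := by
  constructor
  · intro h
    have : i ∈ {i : ℕ | j + 1 ≤ μ.part i} := by rw [μ.conj_set_eq j]; simpa using h
    simpa using this
  · intro h
    have : i ∈ Set.Iio (μ.conj j) := by rw [← μ.conj_set_eq j]; simpa using h
    simpa using this

lemma conj_le_len (j : ℕ) : μ.conj j ≤ μ.len := by
  by_contra hc
  have h1 : μ.len < μ.conj j := by omega
  have := (μ.lt_conj_iff).mp h1
  have := (μ.part_eq_zero_iff (i := μ.len)).mpr le_rfl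
  omega

lemma conj_zero : μ.conj 0 = μ.len := by
  unfold conj len
  congr 1
  ext i
  simp [Function.mem_support]
  omega

lemma conj_antitone : Antitone μ.conj := by
  intro a b hab
  by_contra hc
  have h1 : μ.conj a < μ.conj b := by omega
  have h2 := (μ.lt_conj_iff).mp h1
  have h3 : ¬ (μ.conj a < μ.conj a) := lt_irrefl _
  rw [μ.lt_conj_iff] at h3
  omega

lemma conj_eq_zero_iff {j : ℕ} : μ.conj j = 0 ↔ μ.part 0 ≤ j := by
  constructor
  · intro h
    by_contra hc
    have : 0 < μ.conj j := (μ.lt_conj_iff).mpr (by omega)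
    omega
  · intro h
    by_contra hc
    have := (μ.lt_conj_iff (i := 0) (j := j)).mp (by omega)
    omega

lemma bval_lt_bval {N i j : ℕ} (hij : i < j) (hj : j < N) :
    μ.part j + (N - 1 - j) < μ.part i + (N - 1 - i) := by
  have := μ.antitone (le_of_lt hij)
  omega

lemma mem_betaSet {N x : ℕ} : x ∈ betaSet N μ ↔ ∃ i, i < N ∧ x = μ.part i + (N - 1 - i) := by
  unfold betaSet
  simp only [Finset.mem_image, Finset.mem_range]
  constructor
  · rintro ⟨i, hi, rfl⟩; exact ⟨i, hi, rfl⟩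
  · rintro ⟨i, hi, rfl⟩; exact ⟨i, hi, rfl⟩

lemma card_betaSet (N : ℕ) : (betaSet N μ).card = N := by
  unfold betaSet
  rw [Finset.card_image_of_injOn, Finset.card_range]
  intro i hi j hj hij
  simp only [Finset.mem_coe, Finset.mem_range] at hi hj
  have hij' : μ.part i + (N - 1 - i) = μ.part j + (N - 1 - j) := hij
  rcases lt_trichotomy i j with h | h | h
  · have := μ.bval_lt_bval h hj; omega
  · exact h
  · have := μ.bval_lt_bval h hi; omega

lemma sum_betaSet {N : ℕ} (h : μ.len ≤ N) :
    ∑ b ∈ betaSet N μ, b = μ.size + ∑ i ∈ Finset.range N, (N - 1 - i) := by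
  unfold betaSet
  rw [Finset.sum_image (by
    intro i hi j hj hij
    simp only [Finset.mem_coe, Finset.mem_range] at hi hj
    have hij' : μ.part i + (N - 1 - i) = μ.part j + (N - 1 - j) := hij
    rcases lt_trichotomy i j with hh | hh | hh
    · have := μ.bval_lt_bval hh hj; omega
    · exact hh
    · have := μ.bval_lt_bval hh hi; omega)]
  rw [Finset.sum_add_distrib]
  congr 1
  unfold size
  rw [finsum_eq_finset_sum_of_support_subset]
  rw [μ.support_eq]
  intro x hx
  simp only [Set.mem_Iio] at hx
  simp only [Finset.coe_range, Set.mem_Iio]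
  omega

end PartitionNat
namespace PartitionNat
variable (μ : PartitionNat)

lemma not_mem_betaSet_iff {N x : ℕ} (h : μ.len ≤ N) :
    x ∉ betaSet N μ ↔ ∃ j, x = j + (N - μ.conj j) := by
  have hpart0 : ∀ k, N ≤ k → μ.part k = 0 := fun k hk => (μ.part_eq_zero_iff).mpr (le_trans h hk)
  constructor
  · intro hx
    set S := {k | k < N ∧ x < μ.part k + (N - 1 - k)} with hS
    have hfin : S.Finite := Set.Finite.subset (Set.finite_Iio N) (fun k hk => hk.1)
    have hlow : ∀ a b, a ≤ b → b ∈ S → a ∈ S := by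
      intro a b hab hb
      obtain ⟨hb1, hb2⟩ := hb
      have := μ.antitone hab
      exact ⟨by omega, by omega⟩
    have heq := lower_eq_Iio hfin hlow
    set m := S.ncard with hm
    have hmem : ∀ k, k ∈ S ↔ k < m := by
      intro k; rw [heq]; simp
    have hmN : m ≤ N := by
      by_contra hc
      have : N ∈ S := (hmem N).mpr (by omega)
      exact absurd this.1 (lt_irrefl N)
    have hlt : ∀ k, k < m → x < μ.part k + (N - 1 - k) := fun k hk => ((hmem k).mpr hk).2
    have hge : ∀ k, m ≤ k → k < N → μ.part k + (N - 1 - k) < x := by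
      intro k hk1 hk2
      have h1 : ¬ (x < μ.part k + (N - 1 - k)) := by
        intro hcon
        have : k ∈ S := ⟨hk2, hcon⟩
        rw [hmem] at this; omega
      have h2 : μ.part k + (N - 1 - k) ≠ x := by
        intro hcon
        exact hx (μ.mem_betaSet.mpr ⟨k, hk2, hcon.symm⟩)
      omega
    by_cases hmcase : m = N
    · -- all beads above x; j = x works
      refine ⟨x, ?_⟩
      have hconj : μ.conj x = N := by
        have h1 : μ.conj x ≤ μ.len := μ.conj_le_len x
        rcases Nat.eq_zero_or_pos N with hN0 | hN0
        · omega
        · have h2 : N - 1 < μ.conj x := by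
            rw [μ.lt_conj_iff]
            have := hlt (N - 1) (by omega)
            omega
          omega
      rw [hconj]; omega
    · -- m < N
      have hmN' : m < N := by omega
      have hbm := hge m le_rfl hmN'
      have hxge : N - m ≤ x := by
        have : N - 1 - m ≤ μ.part m + (N - 1 - m) := by omega
        -- part m + (N-1-m) < x, so N-1-m < x, so x ≥ N - m
        omega
      refine ⟨x + m - N, ?_⟩
      have hconj : μ.conj (x + m - N) = m := by
        have hub : μ.conj (x + m - N) ≤ m := by
          by_contra hc
          have : x + m - N + 1 ≤ μ.part m := (μ.lt_conj_iff).mp (by omega)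
          omega
        have hlb : m ≤ μ.conj (x + m - N) := by
          rcases Nat.eq_zero_or_pos m with h0 | h0
          · omega
          · have h1 := hlt (m - 1) (by omega)
            have : m - 1 < μ.conj (x + m - N) := by
              rw [μ.lt_conj_iff]; omega
            omega
        omega
      rw [hconj]; omega
  · rintro ⟨j, rfl⟩ hx
    obtain ⟨i, hiN, hieq⟩ := μ.mem_betaSet.mp hx
    have hcj : μ.conj j ≤ N := le_trans (μ.conj_le_len j) h
    by_cases hic : i < μ.conj j
    · have h1 : j + 1 ≤ μ.part i := (μ.lt_conj_iff).mp hic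
      omega
    · have h1 : ¬ (j + 1 ≤ μ.part i) := fun hcon => hic ((μ.lt_conj_iff).mpr hcon)
      omega

end PartitionNat

open Finset in
lemma strictMonoOn_image_eq {n : ℕ} {f g : ℕ → ℕ}
    (hf : ∀ i j, i < j → j < n → f i < f j) (hg : ∀ i j, i < j → j < n → g i < g j)
    (him : (Finset.range n).image f = (Finset.range n).image g) : ∀ i < n, f i = g i := by
  induction n with
  | zero => intro i hi; omega
  | succ n ih =>
    have hfmem : f n ∈ (Finset.range (n+1)).image g := by
      rw [← him]; exact Finset.mem_image_of_mem f (by simp)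
    have hgmem : g n ∈ (Finset.range (n+1)).image f := by
      rw [him]; exact Finset.mem_image_of_mem g (by simp)
    have hfn : f n = g n := by
      obtain ⟨k, hk, hkeq⟩ := Finset.mem_image.mp hfmem
      obtain ⟨l, hl, hleq⟩ := Finset.mem_image.mp hgmem
      simp only [Finset.mem_range] at hk hl
      have h1 : f n ≤ g n := by
        rcases Nat.lt_succ_iff_lt_or_eq.mp hk with hh | hh
        · have := hg k n hh (by omega); omega
        · subst hh; omega
      have h2 : g n ≤ f n := by
        rcases Nat.lt_succ_iff_lt_or_eq.mp hl with hh | hh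
        · have := hf l n hh (by omega); omega
        · subst hh; omega
      omega
    have herase : (Finset.range n).image f = (Finset.range n).image g := by
      have hef : (Finset.range n).image f = ((Finset.range (n+1)).image f).erase (f n) := by
        ext y
        simp only [Finset.mem_image, Finset.mem_erase, Finset.mem_range]
        constructor
        · rintro ⟨k, hk, rfl⟩
          have := hf k n hk (by omega)
          exact ⟨by omega, k, by omega, rfl⟩
        · rintro ⟨hne, k, hk, rfl⟩
          rcases Nat.lt_succ_iff_lt_or_eq.mp hk with hh | hh
          · exact ⟨k, hh, rfl⟩
          · subst hh; omega
      have heg : (Finset.range n).image g = ((Finset.range (n+1)).image g).erase (g n) := by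
        ext y
        simp only [Finset.mem_image, Finset.mem_erase, Finset.mem_range]
        constructor
        · rintro ⟨k, hk, rfl⟩
          have := hg k n hk (by omega)
          exact ⟨by omega, k, by omega, rfl⟩
        · rintro ⟨hne, k, hk, rfl⟩
          rcases Nat.lt_succ_iff_lt_or_eq.mp hk with hh | hh
          · exact ⟨k, hh, rfl⟩
          · subst hh; omega
      rw [hef, heg, him, hfn]
    intro i hi
    rcases Nat.lt_succ_iff_lt_or_eq.mp hi with hh | hh
    · exact ih (fun a b hab hbn => hf a b hab (by omega)) (fun a b hab hbn => hg a b hab (by omega)) herase i hh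
    · subst hh; exact hfn
namespace PartitionNat
variable (μ : PartitionNat)

/-- reflected complement set -/
noncomputable def rcSet (N : ℕ) : Finset ℕ :=
  (Finset.range N).image fun j => μ.conj j + (N - 1 - j)

lemma mem_rcSet {N x : ℕ} : x ∈ μ.rcSet N ↔ ∃ j, j < N ∧ x = μ.conj j + (N - 1 - j) := by
  unfold rcSet
  simp only [Finset.mem_image, Finset.mem_range]
  constructor
  · rintro ⟨j, hj, rfl⟩; exact ⟨j, hj, rfl⟩
  · rintro ⟨j, hj, rfl⟩; exact ⟨j, hj, rfl⟩

lemma reflect_not_mem_iff {N x : ℕ} (hlen : μ.len ≤ N) (hpart : μ.part 0 ≤ N)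
    (hx : x < 2 * N) : (2 * N - 1 - x ∉ betaSet N μ) ↔ x ∈ μ.rcSet N := by
  rw [μ.not_mem_betaSet_iff hlen, μ.mem_rcSet]
  constructor
  · rintro ⟨j, hj⟩
    have hcj : μ.conj j ≤ N := le_trans (μ.conj_le_len j) hlen
    have hjN : j < N := by
      by_contra hc
      have : μ.conj j = 0 := (μ.conj_eq_zero_iff).mpr (by omega)
      omega
    exact ⟨j, hjN, by omega⟩
  · rintro ⟨j, hjN, rfl⟩
    have hcj : μ.conj j ≤ N := le_trans (μ.conj_le_len j) hlen
    exact ⟨j, by omega⟩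

lemma betaSet_eq_rcSet_iff {N : ℕ} (hlen : μ.len ≤ N) (hpart : μ.part 0 ≤ N) :
    betaSet N μ = μ.rcSet N ↔ SelfConj μ := by
  constructor
  · intro heq
    have hfb : ∀ i j, i < j → j < N → 2 * N - (μ.part i + (N - 1 - i)) < 2 * N - (μ.part j + (N - 1 - j)) := by
      intro i j hij hj
      have h1 := μ.bval_lt_bval hij hj
      have h2 : μ.part i ≤ μ.part 0 := μ.antitone (by omega)
      omega
    have hgb : ∀ i j, i < j → j < N → 2 * N - (μ.conj i + (N - 1 - i)) < 2 * N - (μ.conj j + (N - 1 - j)) := by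
      intro i j hij hj
      have h1 : μ.conj j ≤ μ.conj i := μ.conj_antitone (le_of_lt hij)
      have h2 : μ.conj i ≤ N := le_trans (μ.conj_le_len i) hlen
      omega
    have him : (Finset.range N).image (fun i => 2 * N - (μ.part i + (N - 1 - i))) =
        (Finset.range N).image (fun j => 2 * N - (μ.conj j + (N - 1 - j))) := by
      have h1 : (Finset.range N).image (fun i => 2 * N - (μ.part i + (N - 1 - i))) =
          (betaSet N μ).image (fun x => 2 * N - x) := by
        unfold betaSet; rw [Finset.image_image]; rfl
      have h2 : (Finset.range N).image (fun j => 2 * N - (μ.conj j + (N - 1 - j))) =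
          (μ.rcSet N).image (fun x => 2 * N - x) := by
        unfold rcSet; rw [Finset.image_image]; rfl
      rw [h1, h2, heq]
    have := strictMonoOn_image_eq hfb hgb him
    intro j
    by_cases hj : j < N
    · have h3 := this j hj
      have h2 : μ.part j ≤ μ.part 0 := μ.antitone (by omega)
      have h4 : μ.conj j ≤ N := le_trans (μ.conj_le_len j) hlen
      omega
    · have h1 : μ.part j = 0 := (μ.part_eq_zero_iff).mpr (by omega)
      have h2 : μ.conj j = 0 := (μ.conj_eq_zero_iff).mpr (by omega)
      omega
  · intro hsc
    unfold betaSet rcSet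
    apply Finset.image_congr
    intro i _
    simp only []
    rw [hsc i]

lemma selfConj_iff_symm {N : ℕ} (hlen : μ.len ≤ N) (hpart : μ.part 0 ≤ N) :
    SelfConj μ ↔ ∀ x, x < 2 * N → (x ∈ betaSet N μ ↔ 2 * N - 1 - x ∉ betaSet N μ) := by
  rw [← μ.betaSet_eq_rcSet_iff hlen hpart]
  constructor
  · intro heq x hx
    rw [μ.reflect_not_mem_iff hlen hpart hx, heq]
  · intro hsym
    ext x
    by_cases hx : x < 2 * N
    · rw [← μ.reflect_not_mem_iff hlen hpart hx, ← hsym x hx]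
    · constructor
      · intro hmem
        obtain ⟨i, hi, rfl⟩ := μ.mem_betaSet.mp hmem
        have : μ.part i ≤ μ.part 0 := μ.antitone (by omega)
        omega
      · intro hmem
        obtain ⟨j, hj, rfl⟩ := μ.mem_rcSet.mp hmem
        have : μ.conj j ≤ N := le_trans (μ.conj_le_len j) hlen
        omega

end PartitionNat
lemma exists_k_of_mod {p x b : ℕ} (hp : 0 < p) (hxb : x ≤ b) (hm : x % p = b % p) :
    ∃ k, b = x + k * p := by
  have h1 : p ∣ b - x := (Nat.modEq_iff_dvd' hxb).mp hm
  refine ⟨(b - x) / p, ?_⟩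
  have := Nat.div_mul_cancel h1
  omega

lemma mod_sub_ge {p x y : ℕ} (hp : 0 < p) (hxy : x < y) (hm : x % p = y % p) : x + p ≤ y := by
  obtain ⟨k, rfl⟩ := exists_k_of_mod hp (le_of_lt hxy) hm
  have : k ≠ 0 := by rintro rfl; omega
  have : 1 ≤ k := by omega
  calc x + p ≤ x + k * p := by nlinarith
  _ = x + k * p := rfl

section Gamma

variable {p N : ℕ} {γ : PartitionNat} {ρ : ℕ → ℕ}

lemma beta_le {μ : PartitionNat} {N b : ℕ} (hb : b ∈ betaSet N μ) : b ≤ μ.part 0 + (N - 1) := by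
  obtain ⟨i, hi, rfl⟩ := μ.mem_betaSet.mp hb
  have := μ.antitone (Nat.zero_le i)
  omega

lemma core_step (hcore : IsCore p γ) (hp : 0 < p) (hlen : γ.len ≤ N) {b : ℕ}
    (hb : b ∈ betaSet N γ) (hpb : p ≤ b) : b - p ∈ betaSet N γ := by
  by_contra hc
  obtain ⟨j, hj⟩ := (γ.not_mem_betaSet_iff hlen).mp hc
  obtain ⟨i, hiN, hieq⟩ := γ.mem_betaSet.mp hb
  have hcjN : γ.conj j ≤ N := le_trans (γ.conj_le_len j) hlen
  have hnode : j < γ.part i := by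
    by_contra hcc
    have h2 : γ.conj j ≤ i := by
      by_contra h3
      have := (γ.lt_conj_iff).mp (show i < γ.conj j by omega)
      omega
    omega
  have hhook : γ.hook i j = p := by
    unfold PartitionNat.hook
    have h2 : i < γ.conj j := (γ.lt_conj_iff).mpr hnode
    omega
  exact hcore i j hnode (hhook ▸ dvd_refl p)

lemma core_dc_aux (hcore : IsCore p γ) (hp : 0 < p) (hlen : γ.len ≤ N) :
    ∀ k x, x + k * p ∈ betaSet N γ → x ∈ betaSet N γ := by
  intro k
  induction k with
  | zero => intro x hx; simpa using hx
  | succ k ih =>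
    intro x hx
    apply ih
    have h1 := core_step hcore hp hlen hx (by nlinarith)
    have h2 : x + (k + 1) * p - p = x + k * p := by ring_nf; omega
    rwa [h2] at h1

lemma core_dc (hcore : IsCore p γ) (hp : 0 < p) (hlen : γ.len ≤ N) {b x : ℕ}
    (hb : b ∈ betaSet N γ) (hxb : x ≤ b) (hm : x % p = b % p) : x ∈ betaSet N γ := by
  obtain ⟨k, rfl⟩ := exists_k_of_mod hp hxb hm
  exact core_dc_aux hcore hp hlen k x hb

lemma low_beads {t : ℕ} (hlen : γ.len ≤ N) (ht : t < N - γ.len) : t ∈ betaSet N γ := by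
  rw [γ.mem_betaSet]
  refine ⟨N - 1 - t, by omega, ?_⟩
  have : γ.part (N - 1 - t) = 0 := (γ.part_eq_zero_iff).mpr (by omega)
  omega

lemma sc_part0 {γ : PartitionNat} (hsc : SelfConj γ) : γ.part 0 = γ.len := by
  rw [hsc 0, γ.conj_zero]

lemma rho_mem (hρ : IsRho p N γ ρ) {i : ℕ} (hi : i < p) : ρ i ∈ betaSet N γ := (hρ.2.1 i hi).1

lemma rho_max (hρ : IsRho p N γ ρ) {i : ℕ} (hi : i < p) :
    ∀ b ∈ betaSet N γ, b % p = ρ i % p → b ≤ ρ i := (hρ.2.1 i hi).2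

lemma rho_mono (hρ : IsRho p N γ ρ) {i j : ℕ} (hij : i < j) (hj : j < p) : ρ i < ρ j :=
  hρ.1 i j hij hj

lemma rho_le (hρ : IsRho p N γ ρ) (hsc : SelfConj γ) {i : ℕ} (hi : i < p) :
    ρ i ≤ γ.len + (N - 1) := by
  have h1 := beta_le (rho_mem hρ hi)
  rw [sc_part0 hsc] at h1
  exact h1

end Gamma
section Gamma2

variable {p N : ℕ} {γ : PartitionNat} {ρ : ℕ → ℕ}

lemma rho_ge (hρ : IsRho p N γ ρ) (hp : 0 < p) (hNlen : γ.len + 2 * p ≤ N) {i : ℕ}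
    (hi : i < p) : ρ i % p + p ≤ ρ i := by
  have hmod : ρ i % p < p := Nat.mod_lt _ hp
  have hx : ρ i % p + p ∈ betaSet N γ := low_beads (by omega) (by omega)
  have h2 : (ρ i % p + p) % p = ρ i % p := by
    rw [Nat.add_mod_right]; exact Nat.mod_mod_of_dvd _ dvd_rfl
  have := rho_max hρ hi _ hx h2
  omega

lemma rho_ge_p (hρ : IsRho p N γ ρ) (hp : 0 < p) (hNlen : γ.len + 2 * p ≤ N) {i : ℕ}
    (hi : i < p) : p ≤ ρ i := by
  have := rho_ge hρ hp hNlen hi; omega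

lemma rho_sub_p_mem (hρ : IsRho p N γ ρ) (hp : 0 < p) (hcore : IsCore p γ)
    (hNlen : γ.len + 2 * p ≤ N) {i : ℕ} (hi : i < p) : ρ i - p ∈ betaSet N γ := by
  have hge := rho_ge_p hρ hp hNlen hi
  apply core_dc hcore hp (by omega) (rho_mem hρ hi) (by omega)
  have : ρ i - p + p = ρ i := by omega
  conv_rhs => rw [← this]
  rw [Nat.add_mod_right]

lemma rho_top_not_mem (hρ : IsRho p N γ ρ) (hp : 0 < p) {i : ℕ} (hi : i < p) :
    ρ i + p ∉ betaSet N γ := by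
  intro hc
  have := rho_max hρ hi _ hc (Nat.add_mod_right _ _)
  omega

lemma is_rho_iff (hρ : IsRho p N γ ρ) (hp : 0 < p) (hcore : IsCore p γ)
    (hNlen : γ.len + 2 * p ≤ N) {y : ℕ} :
    (y ∈ betaSet N γ ∧ y + p ∉ betaSet N γ) ↔ ∃ i, i < p ∧ y = ρ i := by
  constructor
  · rintro ⟨hy, hyp⟩
    obtain ⟨i, hi, hieq⟩ := hρ.2.2 (y % p) (Nat.mod_lt _ hp)
    have hle : y ≤ ρ i := rho_max hρ hi _ hy (by omega)
    rcases eq_or_lt_of_le hle with heq | hlt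
    · exact ⟨i, hi, heq⟩
    · exfalso
      have h2 : y + p ≤ ρ i := mod_sub_ge hp hlt (by omega)
      exact hyp (core_dc hcore hp (by omega) (rho_mem hρ hi) h2 (by rw [Nat.add_mod_right]; omega))
  · rintro ⟨i, hi, rfl⟩
    exact ⟨rho_mem hρ hi, rho_top_not_mem hρ hp hi⟩

lemma gamma_symm (hsc : SelfConj γ) (hlenN : γ.len ≤ N) :
    ∀ x, x < 2 * N → (x ∈ betaSet N γ ↔ 2 * N - 1 - x ∉ betaSet N γ) :=
  (γ.selfConj_iff_symm hlenN (by rw [sc_part0 hsc]; exact hlenN)).mp hsc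

lemma rho_reflect (hρ : IsRho p N γ ρ) (hp : 0 < p) (hcore : IsCore p γ) (hsc : SelfConj γ)
    (hNlen : γ.len + 2 * p ≤ N) {i : ℕ} (hi : i < p) :
    ρ (p - 1 - i) = 2 * N - 1 - p - ρ i := by
  have hbound : ∀ j, j < p → ρ j ≤ 2 * N - 2 * p - 1 := by
    intro j hj
    have := rho_le hρ hsc hj
    omega
  have hexists : ∀ j, j < p → ∃ l, l < p ∧ ρ l = 2 * N - 1 - p - ρ j := by
    intro j hj
    have hj1 := hbound j hj
    have hmem : 2 * N - 1 - p - ρ j ∈ betaSet N γ := by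
      have h1 := rho_top_not_mem hρ hp hj
      have h2 := gamma_symm (N := N) hsc (by omega) (ρ j + p) (by omega)
      have h3 : ¬ (2 * N - 1 - (ρ j + p) ∉ betaSet N γ) := fun hc => h1 (h2.mpr hc)
      have h4 : 2 * N - 1 - (ρ j + p) = 2 * N - 1 - p - ρ j := by omega
      rw [h4] at h3
      exact not_not.mp h3
    have hnot : 2 * N - 1 - p - ρ j + p ∉ betaSet N γ := by
      have h1 := (gamma_symm (N := N) hsc (by omega) (ρ j) (by omega)).mp (rho_mem hρ hj)
      have h2 : 2 * N - 1 - p - ρ j + p = 2 * N - 1 - ρ j := by omega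
      rw [h2]
      exact h1
    obtain ⟨l, hl, hleq⟩ := (is_rho_iff hρ hp hcore hNlen).mp ⟨hmem, hnot⟩
    exact ⟨l, hl, hleq.symm⟩
  set σ : ℕ → ℕ := fun k => 2 * N - 1 - p - ρ (p - 1 - k) with hσ
  have hσmono : ∀ a b, a < b → b < p → σ a < σ b := by
    intro a b hab hb
    have h1 : ρ (p - 1 - b) < ρ (p - 1 - a) := rho_mono hρ (by omega) (by omega)
    have h2 := hbound (p - 1 - a) (by omega)
    have h3 := hbound (p - 1 - b) (by omega)
    simp only [hσ]
    omega
  have hρmono : ∀ a b, a < b → b < p → ρ a < ρ b := fun a b hab hb => rho_mono hρ hab hb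
  have hsub : (Finset.range p).image σ ⊆ (Finset.range p).image ρ := by
    intro y hy
    obtain ⟨k, hk, rfl⟩ := Finset.mem_image.mp hy
    simp only [Finset.mem_range] at hk
    obtain ⟨l, hl, hleq⟩ := hexists (p - 1 - k) (by omega)
    exact Finset.mem_image.mpr ⟨l, Finset.mem_range.mpr hl, hleq⟩
  have hinj : ∀ (f : ℕ → ℕ), (∀ a b, a < b → b < p → f a < f b) →
      ((Finset.range p).image f).card = p := by
    intro f hf
    rw [Finset.card_image_of_injOn, Finset.card_range]
    intro a ha b hb hab
    simp only [Finset.coe_range, Set.mem_Iio] at ha hb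
    rcases lt_trichotomy a b with h | h | h
    · have := hf a b h hb; omega
    · exact h
    · have := hf b a h ha; omega
  have heq : (Finset.range p).image σ = (Finset.range p).image ρ :=
    Finset.eq_of_subset_of_card_le hsub (by rw [hinj σ hσmono, hinj ρ hρmono])
  have := strictMonoOn_image_eq hσmono hρmono heq (p - 1 - i) (by omega)
  simp only [hσ] at this
  have harg : p - 1 - (p - 1 - i) = i := by omega
  rw [harg] at this
  omega

end Gamma2
section Transfer

lemma mod_succ_formula {p b : ℕ} (hp : 0 < p) :
    (b + 1) % p = if b % p + 1 = p then 0 else b % p + 1 := by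
  have hdm : p * (b / p) + b % p = b := Nat.div_add_mod b p
  have hc : b % p < p := Nat.mod_lt _ hp
  set c := b % p with hcdef
  have h1 : b + 1 = p * (b / p) + (c + 1) := by omega
  rw [h1, Nat.mul_add_mod]
  by_cases h2 : c + 1 = p
  · rw [h2]; simp
  · rw [Nat.mod_eq_of_lt (by omega)]; rw [if_neg h2]

lemma pred_mod_formula {p r : ℕ} (hp : 0 < p) (hr : r < p) :
    (r + p - 1) % p = if r = 0 then p - 1 else r - 1 := by
  rcases Nat.eq_zero_or_pos r with h | h
  · subst h
    simp only [if_pos rfl]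
    have : 0 + p - 1 = p - 1 := by omega
    rw [this]
    exact Nat.mod_eq_of_lt (by omega)
  · have h1 : r + p - 1 = p + (r - 1) := by omega
    rw [h1, Nat.add_mod_left]
    rw [if_neg (by omega)]
    exact Nat.mod_eq_of_lt (by omega)

lemma succ_mod_eq_iff {p b r : ℕ} (hp : 0 < p) (hr : r < p) :
    ((b + 1) % p = r) ↔ (b % p = (r + p - 1) % p) := by
  rw [mod_succ_formula hp, pred_mod_formula hp hr]
  have hc : b % p < p := Nat.mod_lt _ hp
  split_ifs with h1 h2 h2 <;> omega

/-- count of beads in residue class -/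
def cnt (p M : ℕ) (μ : PartitionNat) (r : ℕ) : ℕ :=
  ((betaSet M μ).filter fun b => b % p = r).card

lemma cnt_big {p M r : ℕ} {μ : PartitionNat} (hp : 0 < p) (hr : p ≤ r) : cnt p M μ r = 0 := by
  unfold cnt
  rw [Finset.card_eq_zero, Finset.filter_eq_empty_iff]
  intro b _
  have : b % p < p := Nat.mod_lt _ hp
  omega

lemma betaSet_succ (μ : PartitionNat) {M : ℕ} (h : μ.len ≤ M) :
    betaSet (M + 1) μ = insert 0 ((betaSet M μ).image (· + 1)) := by
  ext x
  simp only [Finset.mem_insert, Finset.mem_image]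
  rw [μ.mem_betaSet]
  constructor
  · rintro ⟨i, hi, rfl⟩
    by_cases hiM : i < M
    · right
      exact ⟨μ.part i + (M - 1 - i), μ.mem_betaSet.mpr ⟨i, hiM, rfl⟩, by omega⟩
    · left
      have : μ.part i = 0 := (μ.part_eq_zero_iff).mpr (by omega)
      omega
  · rintro (rfl | ⟨a, ha, rfl⟩)
    · refine ⟨M, by omega, ?_⟩
      have : μ.part M = 0 := (μ.part_eq_zero_iff).mpr h
      omega
    · obtain ⟨i, hi, rfl⟩ := μ.mem_betaSet.mp ha
      exact ⟨i, by omega, by omega⟩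

lemma cnt_succ {p M : ℕ} (hp : 0 < p) {μ : PartitionNat} (h : μ.len ≤ M) {r : ℕ} (hr : r < p) :
    cnt p (M + 1) μ r = cnt p M μ ((r + p - 1) % p) + (if r = 0 then 1 else 0) := by
  unfold cnt
  rw [betaSet_succ μ h, Finset.filter_insert]
  have himg : ((betaSet M μ).image (· + 1)).filter (fun b => b % p = r) =
      ((betaSet M μ).filter fun b => b % p = (r + p - 1) % p).image (· + 1) := by
    ext x
    simp only [Finset.mem_filter, Finset.mem_image]
    constructor
    · rintro ⟨⟨a, ha, rfl⟩, h2⟩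
      exact ⟨a, ⟨ha, (succ_mod_eq_iff hp hr).mp h2⟩, rfl⟩
    · rintro ⟨a, ⟨ha, h2⟩, rfl⟩
      exact ⟨⟨a, ha, rfl⟩, (succ_mod_eq_iff hp hr).mpr h2⟩
  have hcard : (((betaSet M μ).image (· + 1)).filter (fun b => b % p = r)).card =
      ((betaSet M μ).filter fun b => b % p = (r + p - 1) % p).card := by
    rw [himg, Finset.card_image_of_injective _ (fun a b hab => by omega)]
  by_cases hr0 : r = 0
  · subst hr0
    rw [if_pos (by simp [Nat.zero_mod])]
    rw [Finset.card_insert_of_notMem (by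
      intro hc
      obtain ⟨hc1, _⟩ := Finset.mem_filter.mp hc
      obtain ⟨a, _, hc3⟩ := Finset.mem_image.mp hc1
      omega)]
    rw [hcard]
    simp
  · rw [if_neg (by simpa [Nat.zero_mod] using Ne.symm hr0)]
    rw [hcard]
    simp [hr0]

lemma ceq_step {p M : ℕ} (hp : 0 < p) {lam γ : PartitionNat} (hl : lam.len ≤ M)
    (hg : γ.len ≤ M) :
    (∀ r, cnt p M lam r = cnt p M γ r) ↔ (∀ r, cnt p (M + 1) lam r = cnt p (M + 1) γ r) := by
  constructor
  · intro h r
    by_cases hr : r < p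
    · rw [cnt_succ hp hl hr, cnt_succ hp hg hr, h]
    · rw [cnt_big hp (by omega), cnt_big hp (by omega)]
  · intro h r
    by_cases hr : r < p
    · have h2 := h ((r + 1) % p)
      rw [cnt_succ hp hl (Nat.mod_lt _ hp), cnt_succ hp hg (Nat.mod_lt _ hp)] at h2
      have h3 : ((r + 1) % p + p - 1) % p = r := by
        by_cases hrp : r + 1 = p
        · have h4 : (r + 1) % p = 0 := by rw [hrp]; exact Nat.mod_self p
          rw [h4, pred_mod_formula hp hp]
          have h5 : (if (0:ℕ) = 0 then p - 1 else 0 - 1) = p - 1 := if_pos rfl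
          omega
        · have h4 : (r + 1) % p = r + 1 := Nat.mod_eq_of_lt (by omega)
          rw [h4, pred_mod_formula hp (by omega), if_neg (by omega)]
          omega
      rw [h3] at h2
      omega
    · rw [cnt_big hp (by omega), cnt_big hp (by omega)]

lemma ceq_up {p M1 M2 : ℕ} (hp : 0 < p) {lam γ : PartitionNat} (h12 : M1 ≤ M2)
    (hl : lam.len ≤ M1) (hg : γ.len ≤ M1)
    (h : ∀ r, cnt p M1 lam r = cnt p M1 γ r) : ∀ r, cnt p M2 lam r = cnt p M2 γ r := by
  induction M2, h12 using Nat.le_induction with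
  | base => exact h
  | succ M hM ih => exact (ceq_step hp (by omega) (by omega)).mp ih

lemma ceq_down {p M1 M2 : ℕ} (hp : 0 < p) {lam γ : PartitionNat} (h12 : M1 ≤ M2)
    (hl : lam.len ≤ M1) (hg : γ.len ≤ M1)
    (h : ∀ r, cnt p M2 lam r = cnt p M2 γ r) : ∀ r, cnt p M1 lam r = cnt p M1 γ r := by
  induction M2, h12 using Nat.le_induction with
  | base => exact h
  | succ M hM ih => exact ih ((ceq_step hp (by omega) (by omega)).mpr h)

end Transfer
section Classes

variable {p r : ℕ}

/-- the bottom run of `c` beads in residue class `r` -/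
def run (p r c : ℕ) : Finset ℕ := (Finset.range c).image fun t => r + t * p

lemma mem_run {c x : ℕ} : x ∈ run p r c ↔ ∃ t, t < c ∧ x = r + t * p := by
  unfold run
  simp only [Finset.mem_image, Finset.mem_range]
  constructor
  · rintro ⟨t, ht, rfl⟩; exact ⟨t, ht, rfl⟩
  · rintro ⟨t, ht, rfl⟩; exact ⟨t, ht, rfl⟩

lemma run_inj (hp : 0 < p) {t s : ℕ} (h : r + t * p = r + s * p) : t = s := by
  have h1 : t * p = s * p := by omega
  exact Nat.eq_of_mul_eq_mul_right hp h1

lemma run_card (hp : 0 < p) {c : ℕ} : (run p r c).card = c := by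
  unfold run
  rw [Finset.card_image_of_injOn fun a _ b _ hab => run_inj hp hab, Finset.card_range]

lemma run_succ {c : ℕ} : run p r (c + 1) = insert (r + c * p) (run p r c) := by
  unfold run
  rw [Finset.range_add_one, Finset.image_insert]

lemma run_sum_succ (hp : 0 < p) {c : ℕ} :
    ∑ x ∈ run p r (c + 1), x = ∑ x ∈ run p r c, x + (r + c * p) := by
  rw [run_succ, Finset.sum_insert (by
    rw [mem_run]
    rintro ⟨t, ht, hteq⟩
    have := run_inj hp hteq.symm
    omega)]
  omega

lemma run_erase_top (hp : 0 < p) {c : ℕ} :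
    (run p r (c + 1)).erase (r + c * p) = run p r c := by
  ext x
  rw [Finset.mem_erase, mem_run, mem_run]
  constructor
  · rintro ⟨hne, t, ht, rfl⟩
    refine ⟨t, ?_, rfl⟩
    rcases Nat.lt_succ_iff_lt_or_eq.mp ht with h | h
    · exact h
    · exact absurd (h ▸ rfl) hne
  · rintro ⟨t, ht, rfl⟩
    refine ⟨fun h => by have := run_inj hp h; omega, t, by omega, rfl⟩

lemma mem_run_of_mod (hp : 0 < p) (hr : r < p) {c x : ℕ} (hx : x % p = r)
    (hbound : x ≤ r + (c - 1) * p) (hc : 1 ≤ c) : x ∈ run p r c := by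
  have hrx : r ≤ x := hx ▸ Nat.mod_le x p
  obtain ⟨t, rfl⟩ := exists_k_of_mod hp hrx (by rw [hx, Nat.mod_eq_of_lt hr])
  rw [mem_run]
  refine ⟨t, ?_, rfl⟩
  have h2 : t * p ≤ (c - 1) * p := by omega
  have h3 : t ≤ c - 1 := Nat.le_of_mul_le_mul_right h2 hp
  omega

lemma class_max_ge (hp : 0 < p) (hr : r < p) {C : Finset ℕ} (hC : ∀ x ∈ C, x % p = r)
    (hne : C.Nonempty) : r + (C.card - 1) * p ≤ C.max' hne := by
  by_contra hcon
  have hmax : (C.max' hne) % p = r := hC _ (C.max'_mem hne)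
  have hrm : r ≤ C.max' hne := hmax ▸ Nat.mod_le _ _
  have hcpos : 1 ≤ C.card := Finset.card_pos.mpr hne
  have hc2 : 2 ≤ C.card := by
    by_contra h
    have h1 : C.card = 1 := by omega
    have h2 : (C.card - 1) * p = 0 := by rw [h1]; norm_num
    omega
  have hsub : C ⊆ run p r (C.card - 1) := by
    intro x hx
    have hxr := hC x hx
    have hrx : r ≤ x := hxr ▸ Nat.mod_le x p
    obtain ⟨t, rfl⟩ := exists_k_of_mod hp hrx (by rw [hxr, Nat.mod_eq_of_lt hr])
    have hxm : r + t * p ≤ C.max' hne := Finset.le_max' C _ hx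
    have ht : t * p < (C.card - 1) * p := by omega
    have ht2 : t < C.card - 1 := lt_of_mul_lt_mul_right ht (Nat.zero_le p)
    rw [mem_run]
    exact ⟨t, ht2, rfl⟩
  have hcc := Finset.card_le_card hsub
  rw [run_card hp] at hcc
  omega

lemma class_sum_ge (hp : 0 < p) (hr : r < p) :
    ∀ (c : ℕ) (C : Finset ℕ), (∀ x ∈ C, x % p = r) → C.card = c →
    (∑ x ∈ run p r c, x ≤ ∑ x ∈ C, x) ∧
    (∑ x ∈ C, x = ∑ x ∈ run p r c, x → C = run p r c) := by
  intro c
  induction c with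
  | zero =>
    intro C hC hcard
    have hC0 : C = ∅ := Finset.card_eq_zero.mp hcard
    have hr0 : run p r 0 = ∅ := by unfold run; simp
    rw [hC0, hr0]
    exact ⟨le_rfl, fun _ => rfl⟩
  | succ c ih =>
    intro C hC hcard
    have hne : C.Nonempty := Finset.card_pos.mp (by omega)
    have hmem := C.max'_mem hne
    have hcard' : (C.erase (C.max' hne)).card = c := by
      rw [Finset.card_erase_of_mem hmem]; omega
    have ihe := ih (C.erase (C.max' hne)) (fun x hx => hC x (Finset.mem_of_mem_erase hx)) hcard'
    have hmge : r + c * p ≤ C.max' hne := by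
      have := class_max_ge hp hr hC hne
      rw [hcard] at this
      simpa using this
    have hsumer : ∑ x ∈ C.erase (C.max' hne), x + C.max' hne = ∑ x ∈ C, x :=
      Finset.sum_erase_add C _ hmem
    constructor
    · rw [run_sum_succ hp]
      have := ihe.1
      omega
    · intro heq
      rw [run_sum_succ hp] at heq
      have h2 : C.max' hne = r + c * p := by
        have := ihe.1; omega
      have h3 : C.erase (C.max' hne) = run p r c := ihe.2 (by omega)
      rw [run_succ, ← h3, ← h2]
      exact (Finset.insert_erase hmem).symm

lemma subset_erase_one {C R : Finset ℕ} (hsub : C ⊆ R) (hcard : C.card + 1 = R.card) :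
    ∃ x ∈ R, C = R.erase x ∧ (∑ y ∈ C, y) + x = ∑ y ∈ R, y := by
  have h1 : (R \ C).card = 1 := by rw [Finset.card_sdiff_of_subset hsub]; omega
  obtain ⟨x, hx⟩ := Finset.card_eq_one.mp h1
  have hxRC : x ∈ R \ C := hx ▸ Finset.mem_singleton_self x
  have hxR : x ∈ R := (Finset.mem_sdiff.mp hxRC).1
  have hxC : x ∉ C := (Finset.mem_sdiff.mp hxRC).2
  have hCe : C = R.erase x := by
    ext y
    rw [Finset.mem_erase]
    constructor
    · intro hy; exact ⟨fun h => hxC (h ▸ hy), hsub hy⟩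
    · rintro ⟨hyx, hyR⟩
      by_contra hyC
      have : y ∈ R \ C := Finset.mem_sdiff.mpr ⟨hyR, hyC⟩
      rw [hx, Finset.mem_singleton] at this
      exact hyx this
  refine ⟨x, hxR, hCe, ?_⟩
  rw [hCe]
  exact Finset.sum_erase_add R _ hxR

end Classes
section Shapes

variable {p r : ℕ}

lemma class_bounded_eq_run (hp : 0 < p) (hr : r < p) {c : ℕ} {C : Finset ℕ}
    (hC : ∀ x ∈ C, x % p = r ∧ x < r + c * p) (hcard : C.card = c) : C = run p r c := by
  have hsub : C ⊆ run p r c := by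
    intro x hx
    obtain ⟨hx1, hx2⟩ := hC x hx
    have hrx : r ≤ x := hx1 ▸ Nat.mod_le x p
    obtain ⟨t, rfl⟩ := exists_k_of_mod hp hrx (by rw [hx1, Nat.mod_eq_of_lt hr])
    have ht : t * p < c * p := by omega
    have ht2 : t < c := lt_of_mul_lt_mul_right ht (Nat.zero_le p)
    rw [mem_run]
    exact ⟨t, ht2, rfl⟩
  exact Finset.eq_of_subset_of_card_le hsub (by rw [run_card hp]; omega)

lemma class_split (hp : 0 < p) (hr : r < p) {C : Finset ℕ} (hC : ∀ x ∈ C, x % p = r)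
    {c d : ℕ} (hcard : C.card = c + 1)
    (hsum : ∑ x ∈ C, x = ∑ x ∈ run p r (c + 1), x + d) :
    ∃ k C', c ≤ k ∧ k * p ≤ c * p + d ∧ C = insert (r + k * p) C' ∧
      (∀ x ∈ C', x % p = r ∧ x < r + k * p) ∧ C'.card = c ∧
      ∑ x ∈ C', x + k * p = ∑ x ∈ run p r c, x + (c * p + d) := by
  have hne : C.Nonempty := Finset.card_pos.mp (by omega)
  have hmaxmem := C.max'_mem hne
  have hmax : C.max' hne % p = r := hC _ hmaxmem
  have hrm : r ≤ C.max' hne := hmax ▸ Nat.mod_le _ _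
  obtain ⟨k, hk⟩ := exists_k_of_mod hp hrm (by rw [hmax, Nat.mod_eq_of_lt hr])
  have hck : c ≤ k := by
    have h1 := class_max_ge hp hr hC hne
    rw [hcard] at h1
    simp only [Nat.add_sub_cancel] at h1
    have h2 : c * p ≤ k * p := by omega
    exact Nat.le_of_mul_le_mul_right h2 hp
  have hcard' : (C.erase (C.max' hne)).card = c := by
    rw [Finset.card_erase_of_mem hmaxmem]; omega
  have hsumer : ∑ x ∈ C.erase (C.max' hne), x + C.max' hne = ∑ x ∈ C, x :=
    Finset.sum_erase_add C _ hmaxmem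
  have hrs := run_sum_succ hp (r := r) (c := c)
  have hlow := (class_sum_ge hp hr c (C.erase (C.max' hne))
    (fun x hx => hC x (Finset.mem_of_mem_erase hx)) hcard').1
  refine ⟨k, C.erase (C.max' hne), hck, by omega, ?_, ?_, hcard', by omega⟩
  · rw [← hk]
    exact (Finset.insert_erase hmaxmem).symm
  · intro x hx
    refine ⟨hC x (Finset.mem_of_mem_erase hx), ?_⟩
    have h1 : x ≤ C.max' hne := Finset.le_max' C x (Finset.mem_of_mem_erase hx)
    have h2 : x ≠ C.max' hne := Finset.ne_of_mem_erase hx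
    omega

lemma class_shape_p (hp : 0 < p) (hr : r < p) {C : Finset ℕ} (hC : ∀ x ∈ C, x % p = r)
    {c : ℕ} (hcard : C.card = c) (hsum : ∑ x ∈ C, x = ∑ x ∈ run p r c, x + p) :
    1 ≤ c ∧ C = insert (r + c * p) ((run p r c).erase (r + (c - 1) * p)) := by
  obtain ⟨c', rfl⟩ : ∃ c', c = c' + 1 := by
    rcases Nat.eq_zero_or_pos c with h | h
    · exfalso
      subst h
      have : C = ∅ := Finset.card_eq_zero.mp hcard
      rw [this] at hsum
      have hr0 : run p r 0 = ∅ := by unfold run; simp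
      rw [hr0] at hsum
      simp at hsum
      omega
    · exact ⟨c - 1, by omega⟩
  obtain ⟨k, C', hck, hkb, hCeq, hC'prop, hC'card, hC'sum⟩ := class_split hp hr hC hcard hsum
  have e1 : (c' + 1) * p = c' * p + p := by ring
  have hk1 : k ≤ c' + 1 := by
    have h1 : k * p ≤ (c' + 1) * p := by omega
    exact Nat.le_of_mul_le_mul_right h1 hp
  rcases Nat.eq_or_lt_of_le hck with hkc | hkc
  · -- k = c' : contradiction
    exfalso
    subst hkc
    have hrun := class_bounded_eq_run hp hr hC'prop hC'card
    rw [hrun] at hC'sum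
    omega
  · have hkc2 : k = c' + 1 := by omega
    subst hkc2
    have hC'run : C' = run p r c' := by
      apply (class_sum_ge hp hr c' C' (fun x hx => (hC'prop x hx).1) hC'card).2
      omega
    refine ⟨by omega, ?_⟩
    have h9 : (run p r (c' + 1)).erase (r + (c' + 1 - 1) * p) = run p r c' := by
      rw [Nat.add_sub_cancel, run_erase_top hp]
    rw [h9, hCeq, hC'run]

lemma class_shape_2p (hp : 0 < p) (hr : r < p) {C : Finset ℕ} (hC : ∀ x ∈ C, x % p = r)
    {c : ℕ} (hcard : C.card = c) (hsum : ∑ x ∈ C, x = ∑ x ∈ run p r c, x + 2 * p) :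
    (1 ≤ c ∧ C = insert (r + (c + 1) * p) ((run p r c).erase (r + (c - 1) * p))) ∨
    (2 ≤ c ∧ C = insert (r + c * p) ((run p r c).erase (r + (c - 2) * p))) := by
  obtain ⟨c', rfl⟩ : ∃ c', c = c' + 1 := by
    rcases Nat.eq_zero_or_pos c with h | h
    · exfalso
      subst h
      have hC0 : C = ∅ := Finset.card_eq_zero.mp hcard
      rw [hC0] at hsum
      have hr0 : run p r 0 = ∅ := by unfold run; simp
      rw [hr0] at hsum
      simp at hsum
      omega
    · exact ⟨c - 1, by omega⟩
  obtain ⟨k, C', hck, hkb, hCeq, hC'prop, hC'card, hC'sum⟩ := class_split hp hr hC hcard hsum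
  have e1 : (c' + 1) * p = c' * p + p := by ring
  have e2 : (c' + 2) * p = c' * p + p + p := by ring
  have hk2 : k ≤ c' + 2 := by
    have h1 : k * p ≤ (c' + 2) * p := by omega
    exact Nat.le_of_mul_le_mul_right h1 hp
  rcases Nat.eq_or_lt_of_le hck with hkc | hkc
  · -- k = c' : contradiction
    exfalso
    subst hkc
    have hrun := class_bounded_eq_run hp hr hC'prop hC'card
    rw [hrun] at hC'sum
    omega
  by_cases hkc2 : k = c' + 2
  · -- one bead moved up two: left disjunct
    subst hkc2
    have hC'run : C' = run p r c' := by
      apply (class_sum_ge hp hr c' C' (fun x hx => (hC'prop x hx).1) hC'card).2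
      omega
    left
    refine ⟨by omega, ?_⟩
    have h9 : (run p r (c' + 1)).erase (r + (c' + 1 - 1) * p) = run p r c' := by
      rw [Nat.add_sub_cancel, run_erase_top hp]
    have harg : c' + 1 + 1 = c' + 2 := by omega
    rw [harg, h9, hCeq, hC'run]
  · -- k = c' + 1 : two beads moved up one in same class
    have hkc3 : k = c' + 1 := by omega
    subst hkc3
    have hC'sum2 : ∑ x ∈ C', x = (∑ x ∈ run p r c', x) + p := by
      omega
    have hc'1 : 1 ≤ c' := by
      by_contra hcc
      have hc0 : c' = 0 := by omega
      subst hc0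
      have : C' = ∅ := Finset.card_eq_zero.mp hC'card
      rw [this] at hC'sum2
      have hr0 : run p r 0 = ∅ := by unfold run; simp
      rw [hr0] at hC'sum2
      simp at hC'sum2
      omega
    have hsub : C' ⊆ run p r (c' + 1) := by
      intro x hx
      obtain ⟨hx1, hx2⟩ := hC'prop x hx
      have hrx : r ≤ x := hx1 ▸ Nat.mod_le x p
      obtain ⟨t, rfl⟩ := exists_k_of_mod hp hrx (by rw [hx1, Nat.mod_eq_of_lt hr])
      have ht : t * p < (c' + 1) * p := by omega
      have ht2 : t < c' + 1 := lt_of_mul_lt_mul_right ht (Nat.zero_le p)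
      rw [mem_run]
      exact ⟨t, ht2, rfl⟩
    obtain ⟨x₀, hx₀R, hC'eq, hx₀sum⟩ := subset_erase_one hsub (by rw [run_card hp]; omega)
    have hrR := run_sum_succ hp (r := r) (c := c')
    have hmm : (c' - 1) * p + p = c' * p := by
      have h1 : (c' - 1 + 1) * p = (c' - 1) * p + p := by ring
      have h2 : c' - 1 + 1 = c' := by omega
      rw [h2] at h1
      omega
    have hx₀val : x₀ = r + (c' - 1) * p := by omega
    right
    refine ⟨by omega, ?_⟩
    have harg1 : c' + 1 - 2 = c' - 1 := by omega
    rw [harg1, hCeq, hC'eq, hx₀val]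

end Shapes
section ClassAnalysis

variable {p N M r : ℕ} {γ : PartitionNat} {ρ : ℕ → ℕ}

lemma mem_class_iff {x : ℕ} {X : Finset ℕ} :
    x ∈ X ↔ x ∈ X.filter (fun b => b % p = x % p) := by
  simp [Finset.mem_filter]

lemma sum_classes (hp : 0 < p) (B : Finset ℕ) :
    ∑ x ∈ B, x = ∑ r ∈ Finset.range p, ∑ x ∈ B.filter (fun b => b % p = r), x :=
  (Finset.sum_fiberwise_of_maps_to (fun x _ => Finset.mem_range.mpr (Nat.mod_lt _ hp)) _).symm

lemma class_sum_mod (hp : 0 < p) {C : Finset ℕ} (hC : ∀ x ∈ C, x % p = r) :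
    (∑ x ∈ C, x) % p = (C.card * r) % p := by
  rw [Finset.sum_nat_mod]
  have h1 : ∑ x ∈ C, x % p = ∑ x ∈ C, r := Finset.sum_congr rfl (fun x hx => hC x hx)
  rw [h1, Finset.sum_const, smul_eq_mul]

lemma two_p_split (hp : 0 < p) {f : ℕ → ℕ} {s : Finset ℕ} (hdvd : ∀ r ∈ s, p ∣ f r)
    (hsum : ∑ r ∈ s, f r = 2 * p) :
    (∃ r ∈ s, f r = 2 * p ∧ ∀ r' ∈ s, r' ≠ r → f r' = 0) ∨
    (∃ r r', r ∈ s ∧ r' ∈ s ∧ r ≠ r' ∧ f r = p ∧ f r' = p ∧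
      ∀ r'' ∈ s, r'' ≠ r → r'' ≠ r' → f r'' = 0) := by
  classical
  set T := s.filter (fun r => f r ≠ 0) with hT
  have hsumT : ∑ r ∈ T, f r = 2 * p := by
    rw [hT, Finset.sum_filter_ne_zero]; exact hsum
  have hTlb : ∀ x ∈ T, p ≤ f x := by
    intro x hx
    obtain ⟨hx1, hx2⟩ := Finset.mem_filter.mp hx
    exact Nat.le_of_dvd (Nat.pos_of_ne_zero hx2) (hdvd x hx1)
  have hTcard : T.card * p ≤ 2 * p := by
    calc T.card * p = ∑ _x ∈ T, p := by rw [Finset.sum_const, smul_eq_mul]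
    _ ≤ ∑ x ∈ T, f x := Finset.sum_le_sum hTlb
    _ = 2 * p := hsumT
  have hc2 : T.card ≤ 2 := Nat.le_of_mul_le_mul_right (by omega) hp
  have hzero : ∀ r ∈ s, r ∉ T → f r = 0 := by
    intro r hr hrT
    by_contra hc
    exact hrT (Finset.mem_filter.mpr ⟨hr, hc⟩)
  have hc1 : 1 ≤ T.card := by
    by_contra hc
    have hT0 : T = ∅ := Finset.card_eq_zero.mp (by omega)
    rw [hT0] at hsumT
    simp at hsumT
    omega
  interval_cases hcc : T.card
  · -- card = 1
    obtain ⟨a, ha⟩ := Finset.card_eq_one.mp hcc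
    have haT : a ∈ T := ha ▸ Finset.mem_singleton_self a
    have has : a ∈ s := (Finset.mem_filter.mp haT).1
    left
    refine ⟨a, has, ?_, ?_⟩
    · have : ∑ r ∈ T, f r = f a := by rw [ha, Finset.sum_singleton]
      omega
    · intro r' hr' hne
      apply hzero r' hr'
      rw [ha, Finset.mem_singleton]
      exact hne
  · -- card = 2
    obtain ⟨a, b, hab, hT2⟩ := Finset.card_eq_two.mp hcc
    have haT : a ∈ T := hT2 ▸ Finset.mem_insert_self a {b}
    have hbT : b ∈ T := hT2 ▸ Finset.mem_insert_of_mem (Finset.mem_singleton_self b)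
    have has : a ∈ s := (Finset.mem_filter.mp haT).1
    have hbs : b ∈ s := (Finset.mem_filter.mp hbT).1
    have hsum2 : f a + f b = 2 * p := by
      rw [hT2, Finset.sum_pair hab] at hsumT
      exact hsumT
    have hfa := hTlb a haT
    have hfb := hTlb b hbT
    right
    refine ⟨a, b, has, hbs, hab, by omega, by omega, ?_⟩
    intro r'' hr'' hna hnb
    apply hzero r'' hr''
    rw [hT2]
    simp only [Finset.mem_insert, Finset.mem_singleton]
    rintro (rfl | rfl)
    · exact hna rfl
    · exact hnb rfl

lemma max_of_top_missing (hp : 0 < p) (hcore : IsCore p γ) (hlen : γ.len ≤ M) {m : ℕ}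
    (hm : m ∈ betaSet M γ) (hmp : m + p ∉ betaSet M γ) :
    ∀ b ∈ betaSet M γ, b % p = m % p → b ≤ m := by
  intro b hb hbm
  by_contra hc
  have h1 : m + p ≤ b := mod_sub_ge hp (by omega) hbm.symm
  exact hmp (core_dc hcore hp hlen hb h1 (by rw [Nat.add_mod_right]; exact hbm.symm))

lemma gamma_class_run (hp : 0 < p) (hr : r < p) (hcore : IsCore p γ)
    (hlen2 : γ.len + 2 * p ≤ M) :
    ∃ c, 1 ≤ c ∧ ((betaSet M γ).filter (fun b => b % p = r)).card = c ∧
      (betaSet M γ).filter (fun b => b % p = r) = run p r c := by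
  set C := (betaSet M γ).filter (fun b => b % p = r) with hCdef
  have hrC : r ∈ C := by
    rw [hCdef, Finset.mem_filter]
    exact ⟨low_beads (by omega) (by omega), Nat.mod_eq_of_lt hr⟩
  have hne : C.Nonempty := ⟨r, hrC⟩
  have hmm := C.max'_mem hne
  have hmr : (C.max' hne) % p = r := (Finset.mem_filter.mp hmm).2
  have hrm : r ≤ C.max' hne := hmr ▸ Nat.mod_le _ _
  obtain ⟨k, hk⟩ := exists_k_of_mod hp hrm (by rw [hmr, Nat.mod_eq_of_lt hr])
  have hCrun : C = run p r (k + 1) := by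
    ext x
    rw [mem_run]
    constructor
    · intro hx
      have hx1 : x % p = r := (Finset.mem_filter.mp hx).2
      have hrx : r ≤ x := hx1 ▸ Nat.mod_le x p
      obtain ⟨t, rfl⟩ := exists_k_of_mod hp hrx (by rw [hx1, Nat.mod_eq_of_lt hr])
      have hle : r + t * p ≤ C.max' hne := Finset.le_max' C _ hx
      have ht : t * p ≤ k * p := by omega
      exact ⟨t, by have := Nat.le_of_mul_le_mul_right ht hp; omega, rfl⟩
    · rintro ⟨t, ht, rfl⟩
      rw [hCdef, Finset.mem_filter]
      have hmod : (r + t * p) % p = r := by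
        rw [Nat.add_mul_mod_self_right]; exact Nat.mod_eq_of_lt hr
      refine ⟨?_, hmod⟩
      have ht3 : t * p ≤ k * p := Nat.mul_le_mul_right p (by omega)
      apply core_dc hcore hp (by omega) ((Finset.mem_filter.mp hmm).1) (by omega)
      rw [hmod, hmr]
  exact ⟨k + 1, by omega, by rw [hCrun, run_card hp], hCrun⟩

end ClassAnalysis
section BlockClasses

variable {p M : ℕ} {γ : PartitionNat}

lemma block_classes (hp : 0 < p) (hcore : IsCore p γ) {lam : PartitionNat}
    (hlenγ : γ.len + 2 * p ≤ M) (hlenlam : lam.len ≤ M)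
    (hcnt : ∀ r, cnt p M lam r = cnt p M γ r)
    (hsum : ∑ x ∈ betaSet M lam, x = (∑ x ∈ betaSet M γ, x) + 2 * p) :
    (∃ m, m ∈ betaSet M γ ∧ m + p ∉ betaSet M γ ∧
        betaSet M lam = insert (m + 2 * p) ((betaSet M γ).erase m)) ∨
    (∃ m, m ∈ betaSet M γ ∧ m + p ∉ betaSet M γ ∧ p ≤ m ∧ m - p ∈ betaSet M γ ∧
        betaSet M lam = insert (m + p) ((betaSet M γ).erase (m - p))) ∨
    (∃ m m', m ∈ betaSet M γ ∧ m + p ∉ betaSet M γ ∧ m' ∈ betaSet M γ ∧ m' + p ∉ betaSet M γ ∧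
        m % p ≠ m' % p ∧
        betaSet M lam = insert (m + p) (insert (m' + p) (((betaSet M γ).erase m).erase m'))) := by
  classical
  set B := betaSet M γ with hB
  set L := betaSet M lam with hL
  set Sg : ℕ → Finset ℕ := fun r => B.filter (fun b => b % p = r) with hSg
  set Sl : ℕ → Finset ℕ := fun r => L.filter (fun b => b % p = r) with hSl
  have hcard : ∀ r, (Sl r).card = (Sg r).card := fun r => hcnt r
  have hlmod : ∀ r, ∀ x ∈ Sl r, x % p = r := fun r x hx => (Finset.mem_filter.mp hx).2
  have hgmod : ∀ r, ∀ x ∈ Sg r, x % p = r := fun r x hx => (Finset.mem_filter.mp hx).2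
  have hγrun : ∀ r, r < p → ∃ c, 1 ≤ c ∧ (Sl r).card = c ∧ Sg r = run p r c := by
    intro r hr
    obtain ⟨c, hc1, hc2, hc3⟩ := gamma_class_run (M := M) hp hr hcore hlenγ
    refine ⟨c, hc1, ?_, hc3⟩
    rw [hcard r]
    exact hc2
  have hge : ∀ r, r < p → ∑ x ∈ Sg r, x ≤ ∑ x ∈ Sl r, x := by
    intro r hr
    obtain ⟨c, hc1, hcl, hrun⟩ := hγrun r hr
    rw [hrun]
    exact (class_sum_ge hp hr c (Sl r) (hlmod r) hcl).1
  have hdvd : ∀ r, r < p → p ∣ (∑ x ∈ Sl r, x - ∑ x ∈ Sg r, x) := by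
    intro r hr
    apply (Nat.modEq_iff_dvd' (hge r hr)).mp
    show (∑ x ∈ Sg r, x) % p = (∑ x ∈ Sl r, x) % p
    rw [class_sum_mod hp (hgmod r), class_sum_mod hp (hlmod r), hcard r]
  have hsplitL : ∑ x ∈ L, x = ∑ r ∈ Finset.range p, ∑ x ∈ Sl r, x := sum_classes hp L
  have hsplitB : ∑ x ∈ B, x = ∑ r ∈ Finset.range p, ∑ x ∈ Sg r, x := sum_classes hp B
  have htot : ∑ r ∈ Finset.range p, (∑ x ∈ Sl r, x - ∑ x ∈ Sg r, x) = 2 * p := by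
    have h1 : ∑ r ∈ Finset.range p, ∑ x ∈ Sl r, x =
        ∑ r ∈ Finset.range p, ((∑ x ∈ Sg r, x) + (∑ x ∈ Sl r, x - ∑ x ∈ Sg r, x)) := by
      apply Finset.sum_congr rfl
      intro r hr
      have := hge r (Finset.mem_range.mp hr)
      omega
    rw [Finset.sum_add_distrib] at h1
    omega
  have htopfacts : ∀ r c, r < p → 1 ≤ c → Sg r = run p r c →
      (r + (c - 1) * p ∈ B ∧ (r + (c - 1) * p) % p = r ∧ r + (c - 1) * p + p ∉ B) := by
    intro r c hr hc1 hrun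
    have hmod : (r + (c - 1) * p) % p = r := by
      rw [Nat.add_mul_mod_self_right]; exact Nat.mod_eq_of_lt hr
    have hmem : r + (c - 1) * p ∈ Sg r := by
      rw [hrun, mem_run]
      exact ⟨c - 1, by omega, rfl⟩
    refine ⟨(Finset.filter_subset _ _) hmem, hmod, ?_⟩
    intro hcon
    have hmod2 : (r + (c - 1) * p + p) % p = r := by rw [Nat.add_mod_right]; exact hmod
    have hcon2 : r + (c - 1) * p + p ∈ Sg r := Finset.mem_filter.mpr ⟨hcon, hmod2⟩
    rw [hrun, mem_run] at hcon2
    obtain ⟨t, ht, hteq⟩ := hcon2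
    have e1 : (c - 1 + 1) * p = (c - 1) * p + p := by ring
    have e2 : c - 1 + 1 = c := by omega
    rw [e2] at e1
    have h6 : t * p = c * p := by omega
    have := Nat.eq_of_mul_eq_mul_right hp h6
    omega
  rcases two_p_split hp (fun r hr => hdvd r (Finset.mem_range.mp hr)) htot with
    ⟨r₀, hr₀s, hf2, hothers⟩ | ⟨r₁, r₂, hr₁s, hr₂s, hne12, hfa, hfb, hothers⟩
  · -- single class with excess 2p
    have hr₀ : r₀ < p := Finset.mem_range.mp hr₀s
    have hSleq : ∀ r, r < p → r ≠ r₀ → Sl r = Sg r := by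
      intro r hr hrne
      obtain ⟨c', hc'1, hc'l, hrun'⟩ := hγrun r hr
      have h0 := hothers r (Finset.mem_range.mpr hr) hrne
      have h1 : ∑ x ∈ Sl r, x = ∑ x ∈ Sg r, x := by
        have := hge r hr; omega
      rw [hrun'] at h1 ⊢
      exact (class_sum_ge hp hr c' (Sl r) (hlmod r) hc'l).2 h1
    obtain ⟨c, hc1, hclc, hrun₀⟩ := hγrun r₀ hr₀
    have hsum₀ : ∑ x ∈ Sl r₀, x = (∑ x ∈ run p r₀ c, x) + 2 * p := by
      have h1 := hge r₀ hr₀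
      rw [hrun₀] at h1
      have h2 := hf2
      rw [hrun₀] at h2
      omega
    have hshape := class_shape_2p hp hr₀ (hlmod r₀) hclc hsum₀
    obtain ⟨hm1, hm2, hm3⟩ := htopfacts r₀ c hr₀ hc1 hrun₀
    have hrunB : ∀ x, x ∈ run p r₀ c ↔ (x ∈ B ∧ x % p = r₀) := by
      intro x
      rw [← hrun₀]
      exact Finset.mem_filter
    rcases hshape with ⟨hc1', hshA⟩ | ⟨hc2', hshB⟩
    · -- oneBeta shape
      left
      refine ⟨r₀ + (c - 1) * p, hm1, hm3, ?_⟩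
      have eA : r₀ + (c - 1) * p + 2 * p = r₀ + (c + 1) * p := by
        have e1 : (c - 1 + 2) * p = (c - 1) * p + 2 * p := by ring
        have e2 : c - 1 + 2 = c + 1 := by omega
        rw [e2] at e1
        omega
      rw [eA]
      ext x
      by_cases hxr : x % p = r₀
      · have h1 : x ∈ L ↔ x ∈ Sl r₀ := by
          rw [hSl]; simp only [Finset.mem_filter, hxr, and_true]
        rw [h1, hshA]
        simp only [Finset.mem_insert, Finset.mem_erase]
        rw [hrunB]
        constructor
        · rintro (rfl | ⟨hne, hB1, _⟩)
          · left; rfl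
          · right; exact ⟨hne, hB1⟩
        · rintro (rfl | ⟨hne, hB1⟩)
          · left; rfl
          · right; exact ⟨hne, hB1, hxr⟩
      · have hxp : x % p < p := Nat.mod_lt _ hp
        have h1 : x ∈ L ↔ x ∈ Sl (x % p) := mem_class_iff
        have h2 : Sl (x % p) = Sg (x % p) := hSleq (x % p) hxp (fun h => hxr h)
        have h3 : x ∈ Sg (x % p) ↔ x ∈ B := mem_class_iff.symm
        have hmodtop : (r₀ + (c + 1) * p) % p = r₀ := by
          rw [Nat.add_mul_mod_self_right]; exact Nat.mod_eq_of_lt hr₀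
        have hne1 : x ≠ r₀ + (c + 1) * p := fun h => hxr (by rw [h]; exact hmodtop)
        have hne2 : x ≠ r₀ + (c - 1) * p := fun h => hxr (by rw [h]; exact hm2)
        rw [h1, h2]
        simp only [Finset.mem_insert, Finset.mem_erase]
        rw [show (x ∈ Sg (x % p)) = (x ∈ B) from propext h3]
        constructor
        · intro hxB; right; exact ⟨hne2, hxB⟩
        · rintro (h | ⟨_, hxB⟩)
          · exact absurd h hne1
          · exact hxB
    · -- sqBeta shape
      right; left
      have eSub : r₀ + (c - 1) * p - p = r₀ + (c - 2) * p := by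
        have e1 : (c - 2 + 1) * p = (c - 2) * p + p := by ring
        have e2 : c - 2 + 1 = c - 1 := by omega
        rw [e2] at e1
        omega
      have hple : p ≤ r₀ + (c - 1) * p := by
        have e1 : (c - 2 + 1) * p = (c - 2) * p + p := by ring
        have e2 : c - 2 + 1 = c - 1 := by omega
        rw [e2] at e1
        omega
      have hsubmem : r₀ + (c - 1) * p - p ∈ B := by
        rw [eSub]
        exact ((hrunB _).mp (mem_run.mpr ⟨c - 2, by omega, rfl⟩)).1
      refine ⟨r₀ + (c - 1) * p, hm1, hm3, hple, hsubmem, ?_⟩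
      have eTop : r₀ + (c - 1) * p + p = r₀ + c * p := by
        have e1 : (c - 1 + 1) * p = (c - 1) * p + p := by ring
        have e2 : c - 1 + 1 = c := by omega
        rw [e2] at e1
        omega
      rw [eSub, eTop]
      ext x
      by_cases hxr : x % p = r₀
      · have h1 : x ∈ L ↔ x ∈ Sl r₀ := by
          rw [hSl]; simp only [Finset.mem_filter, hxr, and_true]
        rw [h1, hshB]
        simp only [Finset.mem_insert, Finset.mem_erase]
        rw [hrunB]
        constructor
        · rintro (rfl | ⟨hne, hB1, _⟩)
          · left; rfl
          · right; exact ⟨hne, hB1⟩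
        · rintro (rfl | ⟨hne, hB1⟩)
          · left; rfl
          · right; exact ⟨hne, hB1, hxr⟩
      · have hxp : x % p < p := Nat.mod_lt _ hp
        have h1 : x ∈ L ↔ x ∈ Sl (x % p) := mem_class_iff
        have h2 : Sl (x % p) = Sg (x % p) := hSleq (x % p) hxp (fun h => hxr h)
        have h3 : x ∈ Sg (x % p) ↔ x ∈ B := mem_class_iff.symm
        have hmodtop : (r₀ + c * p) % p = r₀ := by
          rw [Nat.add_mul_mod_self_right]; exact Nat.mod_eq_of_lt hr₀
        have hmodsub : (r₀ + (c - 2) * p) % p = r₀ := by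
          rw [Nat.add_mul_mod_self_right]; exact Nat.mod_eq_of_lt hr₀
        have hne1 : x ≠ r₀ + c * p := fun h => hxr (by rw [h]; exact hmodtop)
        have hne2 : x ≠ r₀ + (c - 2) * p := fun h => hxr (by rw [h]; exact hmodsub)
        rw [h1, h2]
        simp only [Finset.mem_insert, Finset.mem_erase]
        rw [show (x ∈ Sg (x % p)) = (x ∈ B) from propext h3]
        constructor
        · intro hxB; right; exact ⟨hne2, hxB⟩
        · rintro (h | ⟨_, hxB⟩)
          · exact absurd h hne1
          · exact hxB
  · -- two classes with excess p each
    have hr₁ : r₁ < p := Finset.mem_range.mp hr₁s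
    have hr₂ : r₂ < p := Finset.mem_range.mp hr₂s
    have hSleq : ∀ r, r < p → r ≠ r₁ → r ≠ r₂ → Sl r = Sg r := by
      intro r hr hrne1 hrne2
      obtain ⟨c', hc'1, hc'l, hrun'⟩ := hγrun r hr
      have h0 := hothers r (Finset.mem_range.mpr hr) hrne1 hrne2
      have h1 : ∑ x ∈ Sl r, x = ∑ x ∈ Sg r, x := by
        have := hge r hr; omega
      rw [hrun'] at h1 ⊢
      exact (class_sum_ge hp hr c' (Sl r) (hlmod r) hc'l).2 h1
    obtain ⟨c₁, hc₁1, hcl₁, hrun₁⟩ := hγrun r₁ hr₁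
    obtain ⟨c₂, hc₂1, hcl₂, hrun₂⟩ := hγrun r₂ hr₂
    have hsh1 : Sl r₁ = insert (r₁ + c₁ * p) ((run p r₁ c₁).erase (r₁ + (c₁ - 1) * p)) := by
      have hsumr : ∑ x ∈ Sl r₁, x = (∑ x ∈ run p r₁ c₁, x) + p := by
        have h1 := hge r₁ hr₁
        rw [hrun₁] at h1
        have h2 := hfa
        rw [hrun₁] at h2
        omega
      exact (class_shape_p hp hr₁ (hlmod r₁) hcl₁ hsumr).2
    have hsh2 : Sl r₂ = insert (r₂ + c₂ * p) ((run p r₂ c₂).erase (r₂ + (c₂ - 1) * p)) := by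
      have hsumr : ∑ x ∈ Sl r₂, x = (∑ x ∈ run p r₂ c₂, x) + p := by
        have h1 := hge r₂ hr₂
        rw [hrun₂] at h1
        have h2 := hfb
        rw [hrun₂] at h2
        omega
      exact (class_shape_p hp hr₂ (hlmod r₂) hcl₂ hsumr).2
    obtain ⟨hm1, hm2, hm3⟩ := htopfacts r₁ c₁ hr₁ hc₁1 hrun₁
    obtain ⟨hm1', hm2', hm3'⟩ := htopfacts r₂ c₂ hr₂ hc₂1 hrun₂
    have hrunB1 : ∀ x, x ∈ run p r₁ c₁ ↔ (x ∈ B ∧ x % p = r₁) := by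
      intro x; rw [← hrun₁]; exact Finset.mem_filter
    have hrunB2 : ∀ x, x ∈ run p r₂ c₂ ↔ (x ∈ B ∧ x % p = r₂) := by
      intro x; rw [← hrun₂]; exact Finset.mem_filter
    right; right
    refine ⟨r₁ + (c₁ - 1) * p, r₂ + (c₂ - 1) * p, hm1, hm3, hm1', hm3', ?_, ?_⟩
    · rw [hm2, hm2']; exact hne12
    · have eTop1 : r₁ + (c₁ - 1) * p + p = r₁ + c₁ * p := by
        have e1 : (c₁ - 1 + 1) * p = (c₁ - 1) * p + p := by ring
        have e2 : c₁ - 1 + 1 = c₁ := by omega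
        rw [e2] at e1
        omega
      have eTop2 : r₂ + (c₂ - 1) * p + p = r₂ + c₂ * p := by
        have e1 : (c₂ - 1 + 1) * p = (c₂ - 1) * p + p := by ring
        have e2 : c₂ - 1 + 1 = c₂ := by omega
        rw [e2] at e1
        omega
      rw [eTop1, eTop2]
      have hmodtop1 : (r₁ + c₁ * p) % p = r₁ := by
        rw [Nat.add_mul_mod_self_right]; exact Nat.mod_eq_of_lt hr₁
      have hmodtop2 : (r₂ + c₂ * p) % p = r₂ := by
        rw [Nat.add_mul_mod_self_right]; exact Nat.mod_eq_of_lt hr₂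
      ext x
      simp only [Finset.mem_insert, Finset.mem_erase]
      by_cases hxr1 : x % p = r₁
      · have h1 : x ∈ L ↔ x ∈ Sl r₁ := by
          rw [hSl]; simp only [Finset.mem_filter, hxr1, and_true]
        rw [h1, hsh1]
        simp only [Finset.mem_insert, Finset.mem_erase]
        rw [hrunB1]
        have hne1 : x ≠ r₂ + c₂ * p := fun h => hne12 (by rw [← hxr1, h, hmodtop2])
        have hne2 : x ≠ r₂ + (c₂ - 1) * p := fun h => hne12 (by rw [← hxr1, h, hm2'])
        constructor
        · rintro (rfl | ⟨hna, hB1, _⟩)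
          · left; rfl
          · right; right; exact ⟨hne2, hna, hB1⟩
        · rintro (rfl | rfl | ⟨hn2, hn1, hB1⟩)
          · left; rfl
          · exact absurd rfl hne1
          · right; exact ⟨hn1, hB1, hxr1⟩
      · by_cases hxr2 : x % p = r₂
        · have h1 : x ∈ L ↔ x ∈ Sl r₂ := by
            rw [hSl]; simp only [Finset.mem_filter, hxr2, and_true]
          rw [h1, hsh2]
          simp only [Finset.mem_insert, Finset.mem_erase]
          rw [hrunB2]
          have hne1 : x ≠ r₁ + c₁ * p := fun h => hxr1 (by rw [h, hmodtop1])
          have hne2 : x ≠ r₁ + (c₁ - 1) * p := fun h => hxr1 (by rw [h, hm2])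
          constructor
          · rintro (rfl | ⟨hna, hB1, _⟩)
            · right; left; rfl
            · right; right; exact ⟨hna, hne2, hB1⟩
          · rintro (rfl | rfl | ⟨hn2, hn1, hB1⟩)
            · exact absurd rfl hne1
            · left; rfl
            · right; exact ⟨hn2, hB1, hxr2⟩
        · have hxp : x % p < p := Nat.mod_lt _ hp
          have h1 : x ∈ L ↔ x ∈ Sl (x % p) := mem_class_iff
          have h2 : Sl (x % p) = Sg (x % p) :=
            hSleq (x % p) hxp (fun h => hxr1 h) (fun h => hxr2 h)
          have h3 : x ∈ Sg (x % p) ↔ x ∈ B := mem_class_iff.symm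
          have hne1 : x ≠ r₁ + c₁ * p := fun h => hxr1 (by rw [h, hmodtop1])
          have hne2 : x ≠ r₂ + c₂ * p := fun h => hxr2 (by rw [h, hmodtop2])
          have hne3 : x ≠ r₁ + (c₁ - 1) * p := fun h => hxr1 (by rw [h, hm2])
          have hne4 : x ≠ r₂ + (c₂ - 1) * p := fun h => hxr2 (by rw [h, hm2'])
          rw [h1, h2]
          rw [show (x ∈ Sg (x % p)) = (x ∈ B) from propext h3]
          constructor
          · intro hxB; right; right; exact ⟨hne4, hne3, hxB⟩
          · rintro (h | h | ⟨_, _, hxB⟩)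
            · exact absurd h hne1
            · exact absurd h hne2
            · exact hxB

end BlockClasses
section BlockMain

variable {p N : ℕ} {γ : PartitionNat} {ρ : ℕ → ℕ}

lemma block_main (hp : 0 < p) (hcore : IsCore p γ) (hρ : IsRho p N γ ρ)
    (hNlen : γ.len + 2 * p ≤ N) {lam : PartitionNat} (hblock : InBlock p 2 γ lam) :
    lam.len ≤ N ∧ lam.part 0 ≤ γ.part 0 + 2 * p ∧
    ((∃ i, i < p ∧ betaSet N lam = insert (ρ i + 2 * p) ((betaSet N γ).erase (ρ i))) ∨
     (∃ i, i < p ∧ betaSet N lam = insert (ρ i + p) ((betaSet N γ).erase (ρ i - p))) ∨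
     (∃ i j, i < p ∧ j < p ∧ i ≠ j ∧
       betaSet N lam = insert (ρ i + p) (insert (ρ j + p)
         (((betaSet N γ).erase (ρ i)).erase (ρ j))))) := by
  obtain ⟨hsize, hcore2⟩ := hblock
  obtain ⟨_, N₀, hl0, hg0, hcnt0⟩ := hcore2
  have hmulN₀ : N₀ ≤ p * N₀ := Nat.le_mul_of_pos_left N₀ hp
  set M := N + p * N₀ with hM
  have hN₀M : N₀ ≤ M := by omega
  have hcntM : ∀ r, cnt p M lam r = cnt p M γ r := ceq_up hp hN₀M hl0 hg0 hcnt0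
  have hlenγN : γ.len ≤ N := by omega
  have hlenγM : γ.len + 2 * p ≤ M := by omega
  have hlamM : lam.len ≤ M := by omega
  have hsumM : ∑ x ∈ betaSet M lam, x = (∑ x ∈ betaSet M γ, x) + 2 * p := by
    rw [lam.sum_betaSet hlamM, γ.sum_betaSet (by omega), hsize]
    omega
  have hshapeM := block_classes hp hcore hlenγM hlamM hcntM hsumM
  -- any class max of γ at M is large
  have hmaxbig : ∀ m, m ∈ betaSet M γ → m + p ∉ betaSet M γ → M - N + p ≤ m := by
    intro m hm hmp
    have hmax := max_of_top_missing hp hcore (by omega) hm hmp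
    have hMNdiv : (N₀ + 1) * p = (M - N) + p := by
      have : N₀ * p = p * N₀ := Nat.mul_comm N₀ p
      have e1 : (N₀ + 1) * p = N₀ * p + p := by ring
      omega
    have hmodm : m % p < p := Nat.mod_lt _ hp
    have hvB : m % p + (N₀ + 1) * p ∈ betaSet M γ := low_beads (by omega) (by omega)
    have hvmod : (m % p + (N₀ + 1) * p) % p = m % p := by
      rw [Nat.add_mul_mod_self_right]
      exact Nat.mod_mod_of_dvd _ dvd_rfl
    have := hmax _ hvB hvmod
    omega
  -- len lam ≤ N
  have hlenN : lam.len ≤ N := by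
    rcases Nat.eq_zero_or_pos N₀ with h0 | h0
    · omega
    · have hNM : N < M := by
        have : 0 < p * N₀ := Nat.mul_pos hp h0
        omega
      -- all small values are beads of lam at M
      have hlow : ∀ t, t < M - N → t ∈ betaSet M lam := by
        intro t ht
        have htγ : t ∈ betaSet M γ := low_beads (by omega) (by omega)
        rcases hshapeM with ⟨m, hm1, hm2, hLM⟩ | ⟨m, hm1, hm2, hm3, hm4, hLM⟩ |
          ⟨m, m', hm1, hm2, hm1', hm2', hmm', hLM⟩
        · have hbig := hmaxbig m hm1 hm2
          rw [hLM]
          exact Finset.mem_insert_of_mem (Finset.mem_erase.mpr ⟨by omega, htγ⟩)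
        · have hbig := hmaxbig m hm1 hm2
          rw [hLM]
          exact Finset.mem_insert_of_mem (Finset.mem_erase.mpr ⟨by omega, htγ⟩)
        · have hbig := hmaxbig m hm1 hm2
          have hbig' := hmaxbig m' hm1' hm2'
          rw [hLM]
          exact Finset.mem_insert_of_mem (Finset.mem_insert_of_mem
            (Finset.mem_erase.mpr ⟨by omega, Finset.mem_erase.mpr ⟨by omega, htγ⟩⟩))
      by_contra hc
      have hpN : 1 ≤ lam.part N := by
        have := lam.part_eq_zero_iff (i := N)
        omega
      set A := (betaSet M lam).filter (fun b => M - N ≤ b) with hA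
      have hAcard : N + 1 ≤ A.card := by
        apply le_trans (le_of_eq (Finset.card_range (N + 1)).symm)
        apply Finset.card_le_card_of_injOn (fun i => lam.part i + (M - 1 - i))
        · intro i hi
          simp only [Finset.mem_coe, Finset.mem_range] at hi
          have hmem : lam.part i + (M - 1 - i) ∈ betaSet M lam :=
            lam.mem_betaSet.mpr ⟨i, by omega, rfl⟩
          refine Finset.mem_filter.mpr ⟨hmem, ?_⟩
          have := lam.antitone (show i ≤ N by omega)
          beta_reduce
          omega
        · intro i hi j hj hij
          simp only [Finset.coe_range, Set.mem_Iio] at hi hj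
          have hij' : lam.part i + (M - 1 - i) = lam.part j + (M - 1 - j) := hij
          rcases lt_trichotomy i j with h | h | h
          · have := lam.bval_lt_bval h (show j < M by omega); omega
          · exact h
          · have := lam.bval_lt_bval h (show i < M by omega); omega
      have hsub : Finset.range (M - N) ∪ A ⊆ betaSet M lam := by
        intro x hx
        rcases Finset.mem_union.mp hx with h | h
        · exact hlow x (Finset.mem_range.mp h)
        · exact (Finset.mem_filter.mp h).1
      have hdisj : Disjoint (Finset.range (M - N)) A := by
        rw [Finset.disjoint_left]
        intro x hx hxA
        have h1 := Finset.mem_range.mp hx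
        have h2 := (Finset.mem_filter.mp hxA).2
        omega
      have hcards := Finset.card_le_card hsub
      rw [Finset.card_union_of_disjoint hdisj, Finset.card_range, lam.card_betaSet] at hcards
      omega
  have hcntN : ∀ r, cnt p N lam r = cnt p N γ r :=
    ceq_down hp (show N ≤ M by omega) hlenN hlenγN hcntM
  have hsumN : ∑ x ∈ betaSet N lam, x = (∑ x ∈ betaSet N γ, x) + 2 * p := by
    rw [lam.sum_betaSet hlenN, γ.sum_betaSet hlenγN, hsize]
    omega
  have hshapeN := block_classes hp hcore hNlen hlenN hcntN hsumN
  have hpart0 : lam.part 0 ≤ γ.part 0 + 2 * p := by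
    have hx : lam.part 0 + (N - 1) ∈ betaSet N lam :=
      lam.mem_betaSet.mpr ⟨0, by omega, by omega⟩
    have hbAll : ∀ x ∈ betaSet N lam, x ≤ γ.part 0 + (N - 1) + 2 * p := by
      intro x hxx
      rcases hshapeN with ⟨m, hm1, _, hLN⟩ | ⟨m, hm1, _, _, _, hLN⟩ |
        ⟨m, m', hm1, _, hm1', _, _, hLN⟩
      · rw [hLN] at hxx
        rcases Finset.mem_insert.mp hxx with rfl | h
        · have := beta_le hm1; omega
        · have := beta_le (Finset.mem_of_mem_erase h); omega
      · rw [hLN] at hxx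
        rcases Finset.mem_insert.mp hxx with rfl | h
        · have := beta_le hm1; omega
        · have := beta_le (Finset.mem_of_mem_erase h); omega
      · rw [hLN] at hxx
        rcases Finset.mem_insert.mp hxx with rfl | h
        · have := beta_le hm1; omega
        rcases Finset.mem_insert.mp h with rfl | h2
        · have := beta_le hm1'; omega
        · have := beta_le (Finset.mem_of_mem_erase (Finset.mem_of_mem_erase h2)); omega
    have := hbAll _ hx
    omega
  refine ⟨hlenN, hpart0, ?_⟩
  rcases hshapeN with ⟨m, hm1, hm2, hLN⟩ | ⟨m, hm1, hm2, hm3, hm4, hLN⟩ |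
    ⟨m, m', hm1, hm2, hm1', hm2', hmm', hLN⟩
  · obtain ⟨i, hi, rfl⟩ := (is_rho_iff hρ hp hcore hNlen).mp ⟨hm1, hm2⟩
    left
    exact ⟨i, hi, hLN⟩
  · obtain ⟨i, hi, rfl⟩ := (is_rho_iff hρ hp hcore hNlen).mp ⟨hm1, hm2⟩
    right; left
    exact ⟨i, hi, hLN⟩
  · obtain ⟨i, hi, rfl⟩ := (is_rho_iff hρ hp hcore hNlen).mp ⟨hm1, hm2⟩
    obtain ⟨j, hj, rfl⟩ := (is_rho_iff hρ hp hcore hNlen).mp ⟨hm1', hm2'⟩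
    right; right
    refine ⟨i, j, hi, hj, ?_, hLN⟩
    intro hij
    rw [hij] at hmm'
    exact hmm' rfl

end BlockMain
section Symmetry

variable {p N : ℕ} {γ : PartitionNat} {ρ : ℕ → ℕ}

lemma rho_idx_inj (hρ : IsRho p N γ ρ) {i j : ℕ} (hi : i < p) (hj : j < p)
    (h : ρ i = ρ j) : i = j := by
  rcases lt_trichotomy i j with hc | hc | hc
  · have := rho_mono hρ hc hj; omega
  · exact hc
  · have := rho_mono hρ hc hi; omega

lemma rho_res_inj (hρ : IsRho p N γ ρ) {i j : ℕ} (hi : i < p) (hj : j < p)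
    (h : ρ i % p = ρ j % p) : i = j := by
  have h1 := rho_max hρ hj _ (rho_mem hρ hi) h
  have h2 := rho_max hρ hi _ (rho_mem hρ hj) h.symm
  exact rho_idx_inj hρ hi hj (by omega)

lemma oneBeta_eq {B : Finset ℕ} {i : ℕ} :
    oneBeta p B ρ i = insert (ρ i + 2 * p) (B.erase (ρ i)) := by
  unfold oneBeta
  ext x
  simp only [Finset.mem_union, Finset.mem_sdiff, Finset.mem_singleton, Finset.mem_insert,
    Finset.mem_erase]
  tauto

lemma sqBeta_eq {B : Finset ℕ} {i : ℕ} :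
    sqBeta p B ρ i = insert (ρ i + p) (B.erase (ρ i - p)) := by
  unfold sqBeta
  ext x
  simp only [Finset.mem_union, Finset.mem_sdiff, Finset.mem_singleton, Finset.mem_insert,
    Finset.mem_erase]
  tauto

lemma pairBeta_eq {B : Finset ℕ} {i j : ℕ} :
    pairBeta p B ρ i j = insert (ρ i + p) (insert (ρ j + p) ((B.erase (ρ i)).erase (ρ j))) := by
  unfold pairBeta
  ext x
  simp only [Finset.mem_union, Finset.mem_sdiff, Finset.mem_singleton, Finset.mem_insert,
    Finset.mem_erase]
  tauto

lemma pair_insert_comm {a b u v : ℕ} {B : Finset ℕ} :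
    insert u (insert v ((B.erase a).erase b)) = insert v (insert u ((B.erase b).erase a)) := by
  ext x
  simp only [Finset.mem_insert, Finset.mem_erase]
  tauto

lemma pair_symm (hp : 0 < p) (hcore : IsCore p γ) (hsc : SelfConj γ) (hρ : IsRho p N γ ρ)
    (hNlen : γ.len + 2 * p ≤ N) {a b : ℕ}
    (ha : a < p) (hb : b < p) (hab : a < b) (hrefl : ρ b = 2 * N - 1 - p - ρ a) :
    ∀ x, x < 2 * N →
      (x ∈ insert (ρ a + p) (insert (ρ b + p) (((betaSet N γ).erase (ρ a)).erase (ρ b))) ↔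
       2 * N - 1 - x ∉
         insert (ρ a + p) (insert (ρ b + p) (((betaSet N γ).erase (ρ a)).erase (ρ b)))) := by
  intro x hx
  have hba : ρ a ≤ γ.len + (N - 1) := rho_le hρ hsc ha
  have hbb : ρ b ≤ γ.len + (N - 1) := rho_le hρ hsc hb
  have hmono : ρ a < ρ b := rho_mono hρ hab hb
  have hγs := gamma_symm (N := N) hsc (by omega)
  have hBa : ρ a ∈ betaSet N γ := rho_mem hρ ha
  have hBb : ρ b ∈ betaSet N γ := rho_mem hρ hb
  have hpar : ρ b ≠ ρ a + p := by intro h; omega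
  set L' := insert (ρ a + p) (insert (ρ b + p) (((betaSet N γ).erase (ρ a)).erase (ρ b)))
    with hL'
  have hmemL : ∀ z, z ∈ L' ↔
      (z = ρ a + p ∨ z = ρ b + p ∨ (z ≠ ρ b ∧ z ≠ ρ a ∧ z ∈ betaSet N γ)) := by
    intro z
    rw [hL']
    simp only [Finset.mem_insert, Finset.mem_erase]
  by_cases h1 : x = ρ a + p
  · subst h1
    have hyv : 2 * N - 1 - (ρ a + p) = ρ b := by omega
    rw [hyv]
    apply iff_of_true
    · rw [hmemL]; left; rfl
    · rw [hmemL]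
      rintro (h | h | ⟨h, -, -⟩)
      · exact hpar h
      · omega
      · exact h rfl
  by_cases h2 : x = ρ b + p
  · subst h2
    have hyv : 2 * N - 1 - (ρ b + p) = ρ a := by omega
    rw [hyv]
    apply iff_of_true
    · rw [hmemL]; right; left; rfl
    · rw [hmemL]
      rintro (h | h | ⟨-, h, -⟩)
      · omega
      · omega
      · exact h rfl
  by_cases h3 : x = ρ b
  · subst h3
    have hyv : 2 * N - 1 - ρ b = ρ a + p := by omega
    rw [hyv]
    apply iff_of_false
    · rw [hmemL]
      rintro (h | h | ⟨h, -, -⟩)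
      · exact hpar h
      · omega
      · exact h rfl
    · intro hcon
      exact hcon (by rw [hmemL]; left; rfl)
  by_cases h4 : x = ρ a
  · subst h4
    have hyv : 2 * N - 1 - ρ a = ρ b + p := by omega
    rw [hyv]
    apply iff_of_false
    · rw [hmemL]
      rintro (h | h | ⟨-, h, -⟩)
      · omega
      · omega
      · exact h rfl
    · intro hcon
      exact hcon (by rw [hmemL]; right; left; rfl)
  · -- generic x
    have hy1 : 2 * N - 1 - x ≠ ρ a + p := by omega
    have hy2 : 2 * N - 1 - x ≠ ρ b + p := by omega
    have hy3 : 2 * N - 1 - x ≠ ρ b := by omega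
    have hy4 : 2 * N - 1 - x ≠ ρ a := by omega
    have hxiff : x ∈ L' ↔ x ∈ betaSet N γ := by
      rw [hmemL]
      constructor
      · rintro (h | h | ⟨-, -, h⟩)
        · exact absurd h h1
        · exact absurd h h2
        · exact h
      · intro h
        right; right
        exact ⟨h3, h4, h⟩
    have hyiff : 2 * N - 1 - x ∈ L' ↔ 2 * N - 1 - x ∈ betaSet N γ := by
      rw [hmemL]
      constructor
      · rintro (h | h | ⟨-, -, h⟩)
        · exact absurd h hy1
        · exact absurd h hy2
        · exact h
      · intro h
        right; right
        exact ⟨hy3, hy4, h⟩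
    rw [hxiff]
    exact (hγs x hx).trans (not_congr hyiff.symm)

end Symmetry
section Final

variable {p N : ℕ} {γ : PartitionNat} {ρ : ℕ → ℕ}

lemma backward_sc (hp : 0 < p) (hcore : IsCore p γ) (hsc : SelfConj γ) (hρ : IsRho p N γ ρ)
    (hNlen : γ.len + 2 * p ≤ N) (hodd : Odd p) {lam : PartitionNat}
    (hblock : InBlock p 2 γ lam) {k : ℕ} (hk1 : 1 ≤ k) (hk2 : k ≤ (p - 1) / 2)
    (hbeta : betaSet N lam = pairBeta p (betaSet N γ) ρ ((p - 1) / 2 - k) ((p - 1) / 2 + k)) :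
    SelfConj lam := by
  obtain ⟨t, ht⟩ := hodd
  have hm : (p - 1) / 2 = t := by omega
  obtain ⟨hlen, hpart0, -⟩ := block_main hp hcore hρ hNlen hblock
  have hpart0N : lam.part 0 ≤ N := by
    have := sc_part0 hsc
    omega
  apply (lam.selfConj_iff_symm hlen hpart0N).mpr
  intro x hx
  have ha : (p - 1) / 2 - k < p := by omega
  have hb : (p - 1) / 2 + k < p := by omega
  have hab : (p - 1) / 2 - k < (p - 1) / 2 + k := by omega
  have hba : (p - 1) / 2 + k = p - 1 - ((p - 1) / 2 - k) := by omega
  have hrefl : ρ ((p - 1) / 2 + k) = 2 * N - 1 - p - ρ ((p - 1) / 2 - k) := by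
    rw [hba]
    exact rho_reflect hρ hp hcore hsc hNlen ha
  rw [hbeta, pairBeta_eq]
  exact pair_symm hp hcore hsc hρ hNlen ha hb hab hrefl x hx

lemma forward_sc (hp : 0 < p) (hcore : IsCore p γ) (hsc : SelfConj γ) (hρ : IsRho p N γ ρ)
    (hNlen : γ.len + 2 * p ≤ N) (hodd : Odd p) {lam : PartitionNat}
    (hblock : InBlock p 2 γ lam) (hsc2 : SelfConj lam) :
    ∃ k, 1 ≤ k ∧ k ≤ (p - 1) / 2 ∧
      betaSet N lam = pairBeta p (betaSet N γ) ρ ((p - 1) / 2 - k) ((p - 1) / 2 + k) := by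
  obtain ⟨t, ht⟩ := hodd
  have hm : (p - 1) / 2 = t := by omega
  obtain ⟨hlen, hpart0, hshapes⟩ := block_main hp hcore hρ hNlen hblock
  have hpart0N : lam.part 0 ≤ N := by
    have := sc_part0 hsc
    omega
  have hsym := (lam.selfConj_iff_symm hlen hpart0N).mp hsc2
  have hbd : ∀ i, i < p → ρ i ≤ 2 * N - 2 * p - 1 := by
    intro i hi
    have := rho_le hρ hsc hi
    omega
  rcases hshapes with ⟨i, hi, hLN⟩ | ⟨i, hi, hLN⟩ | ⟨i, j, hi, hj, hij, hLN⟩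
  · -- oneBeta impossible
    exfalso
    have hrefl : ρ (p - 1 - i) = 2 * N - 1 - p - ρ i :=
      rho_reflect hρ hp hcore hsc hNlen hi
    have hbi := hbd i hi
    have hbi2 := hbd (p - 1 - i) (by omega)
    have hx : ρ i + 2 * p ∈ betaSet N lam := by rw [hLN]; exact Finset.mem_insert_self _ _
    have h2 := (hsym (ρ i + 2 * p) (by omega)).mp hx
    apply h2
    have hyv : 2 * N - 1 - (ρ i + 2 * p) = ρ (p - 1 - i) - p := by omega
    rw [hyv, hLN]
    apply Finset.mem_insert_of_mem
    apply Finset.mem_erase.mpr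
    refine ⟨?_, rho_sub_p_mem hρ hp hcore hNlen (by omega)⟩
    intro hcon
    have hgep := rho_ge_p hρ hp hNlen (show p - 1 - i < p by omega)
    have hmod : (ρ (p - 1 - i) - p) % p = ρ (p - 1 - i) % p := by
      conv_rhs => rw [← Nat.sub_add_cancel hgep]
      rw [Nat.add_mod_right]
    have hidx : p - 1 - i = i := rho_res_inj hρ (by omega) hi (by rw [← hmod, hcon])
    rw [hidx] at hcon hgep
    omega
  · -- sqBeta impossible
    exfalso
    have hrefl : ρ (p - 1 - i) = 2 * N - 1 - p - ρ i :=
      rho_reflect hρ hp hcore hsc hNlen hi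
    have hbi := hbd i hi
    have hbi2 := hbd (p - 1 - i) (by omega)
    have hx : ρ i + p ∈ betaSet N lam := by rw [hLN]; exact Finset.mem_insert_self _ _
    have h2 := (hsym (ρ i + p) (by omega)).mp hx
    apply h2
    have hyv : 2 * N - 1 - (ρ i + p) = ρ (p - 1 - i) := by omega
    rw [hyv, hLN]
    apply Finset.mem_insert_of_mem
    apply Finset.mem_erase.mpr
    refine ⟨?_, rho_mem hρ (by omega)⟩
    intro hcon
    have hgepi := rho_ge_p hρ hp hNlen hi
    have hmod : (ρ i - p) % p = ρ i % p := by
      conv_rhs => rw [← Nat.sub_add_cancel hgepi]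
      rw [Nat.add_mod_right]
    have hidx : p - 1 - i = i := rho_res_inj hρ (by omega) hi (by rw [hcon, hmod])
    rw [hidx] at hcon
    have := rho_ge_p hρ hp hNlen hi
    omega
  · -- pair case
    have hjeq : j = p - 1 - i := by
      by_contra hnot
      by_cases hii : i = p - 1 - i
      · have hjj : j ≠ p - 1 - j := by omega
        have hrefl : ρ (p - 1 - j) = 2 * N - 1 - p - ρ j :=
          rho_reflect hρ hp hcore hsc hNlen hj
        have hbj := hbd j hj
        have hbj' := hbd (p - 1 - j) (by omega)
        have hx : ρ j + p ∈ betaSet N lam := by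
          rw [hLN]
          exact Finset.mem_insert_of_mem (Finset.mem_insert_self _ _)
        have h2 := (hsym (ρ j + p) (by omega)).mp hx
        apply h2
        have hyv : 2 * N - 1 - (ρ j + p) = ρ (p - 1 - j) := by omega
        rw [hyv, hLN]
        apply Finset.mem_insert_of_mem
        apply Finset.mem_insert_of_mem
        apply Finset.mem_erase.mpr
        refine ⟨?_, Finset.mem_erase.mpr ⟨?_, rho_mem hρ (by omega)⟩⟩
        · intro hcon
          have := rho_idx_inj hρ (by omega) hj hcon
          omega
        · intro hcon
          have := rho_idx_inj hρ (by omega) hi hcon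
          omega
      · have hrefl : ρ (p - 1 - i) = 2 * N - 1 - p - ρ i :=
          rho_reflect hρ hp hcore hsc hNlen hi
        have hbi := hbd i hi
        have hbi' := hbd (p - 1 - i) (by omega)
        have hx : ρ i + p ∈ betaSet N lam := by
          rw [hLN]
          exact Finset.mem_insert_self _ _
        have h2 := (hsym (ρ i + p) (by omega)).mp hx
        apply h2
        have hyv : 2 * N - 1 - (ρ i + p) = ρ (p - 1 - i) := by omega
        rw [hyv, hLN]
        apply Finset.mem_insert_of_mem
        apply Finset.mem_insert_of_mem
        apply Finset.mem_erase.mpr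
        refine ⟨?_, Finset.mem_erase.mpr ⟨?_, rho_mem hρ (by omega)⟩⟩
        · intro hcon
          have := rho_idx_inj hρ (by omega) hj hcon
          omega
        · intro hcon
          have := rho_idx_inj hρ (by omega) hi hcon
          omega
    subst hjeq
    have hii : i ≠ p - 1 - i := fun h => hij (by omega)
    rcases lt_or_gt_of_ne hii with hlt | hgt
    · refine ⟨t - i, by omega, by omega, ?_⟩
      have e1 : (p - 1) / 2 - (t - i) = i := by omega
      have e2 : (p - 1) / 2 + (t - i) = p - 1 - i := by omega
      rw [e1, e2, pairBeta_eq]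
      exact hLN
    · refine ⟨t - (p - 1 - i), by omega, by omega, ?_⟩
      have e1 : (p - 1) / 2 - (t - (p - 1 - i)) = p - 1 - i := by omega
      have e2 : (p - 1) / 2 + (t - (p - 1 - i)) = i := by omega
      rw [e1, e2, pairBeta_eq, pair_insert_comm]
      exact hLN

end Final
/-- the self-conjugate partitions of a self-conjugate weight-2 block
are exactly the `⟨(p−1)/2 − k, (p−1)/2 + k⟩` for `1 ≤ k ≤ (p−1)/2`, and these are
pairwise distinct. -/
theorem stmt5 (p : ℕ) (hp : p.Prime) (hodd : Odd p)
    (γ : PartitionNat) (hγ : IsCore p γ) (hsc : SelfConj γ)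
    (N : ℕ) (hN : p ∣ N) (hNlen : γ.len + 2 * p ≤ N)
    (ρ : ℕ → ℕ) (hρ : IsRho p N γ ρ) :
    (∀ lam : PartitionNat, InBlock p 2 γ lam →
        (SelfConj lam ↔ ∃ k, 1 ≤ k ∧ k ≤ (p - 1) / 2 ∧
          betaSet N lam = pairBeta p (betaSet N γ) ρ ((p - 1) / 2 - k) ((p - 1) / 2 + k))) ∧
    (∀ k l, 1 ≤ k → k ≤ (p - 1) / 2 → 1 ≤ l → l ≤ (p - 1) / 2 →
        pairBeta p (betaSet N γ) ρ ((p - 1) / 2 - k) ((p - 1) / 2 + k) =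
          pairBeta p (betaSet N γ) ρ ((p - 1) / 2 - l) ((p - 1) / 2 + l) → k = l) := by
  have hp0 : 0 < p := hp.pos
  constructor
  · intro lam hblock
    constructor
    · intro hsc2
      exact forward_sc hp0 hγ hsc hρ hNlen hodd hblock hsc2
    · rintro ⟨k, hk1, hk2, hbeta⟩
      exact backward_sc hp0 hγ hsc hρ hNlen hodd hblock hk1 hk2 hbeta
  · intro k l hk1 hk2 hl1 hl2 heq
    obtain ⟨t, ht⟩ := hodd
    have hm : (p - 1) / 2 = t := by omega
    have hbk : (p - 1) / 2 + k < p := by omega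
    have hbl : (p - 1) / 2 + l < p := by omega
    have hal : (p - 1) / 2 - l < p := by omega
    have hx : ρ ((p - 1) / 2 + k) + p ∈
        pairBeta p (betaSet N γ) ρ ((p - 1) / 2 - k) ((p - 1) / 2 + k) := by
      unfold pairBeta
      apply Finset.mem_union_right
      simp
    rw [heq] at hx
    unfold pairBeta at hx
    rcases Finset.mem_union.mp hx with h | h
    · exfalso
      exact rho_top_not_mem hρ hp0 hbk (Finset.mem_sdiff.mp h).1
    · simp only [Finset.mem_insert, Finset.mem_singleton] at h
      rcases h with h | h
      · have hval : ρ ((p - 1) / 2 + k) = ρ ((p - 1) / 2 - l) := by omega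
        have := rho_idx_inj hρ hbk hal hval
        omega
      · have hval : ρ ((p - 1) / 2 + k) = ρ ((p - 1) / 2 + l) := by omega
        have := rho_idx_inj hρ hbk hbl hval
        omega

end ArxivW2
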